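/- arXiv:2301.00423 — 5 statements merged into one kernel-verified Lean document; each statement's English description precedes it below -/
import Mathlib

section
/- Let f_1,…,f_N : ℝ^n → ℝ be convex functions, let 1 ≤ T ≤ N, and define H(x) = (sum of the T largest values among f_1(x),…,f_N(x)). For x ∈ ℝ^n let 𝓜_H(x) be the family of all subsets I ⊆ {1,…,N} with |I| = T such that Σ_{i∈I} f_i(x) = H(x). Then the convex subdifferential of H at x is given by ∂H(x) = conv( ⋃_{I ∈ 𝓜_H(x)} { Σ_{i∈I} s_i : s_i ∈ ∂f_i(x) for every i ∈ I } ), where conv denotes the convex hull and the inner set is the Minkowski sum of the subdifferentials ∂f_i(x) over i ∈ I. -/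
open scoped RealInnerProductSpace BigOperators

/-- The `i`-th smallest entry of `z` (0-indexed): `orderStat z i = z_[i+1]`. -/
noncomputable def orderStat {N : ℕ} (z : Fin N → ℝ) (i : Fin N) : ℝ := z (Tuple.sort z i)

/-- The sum of the `T` largest entries of `z`. -/
noncomputable def topSum {N : ℕ} (T : ℕ) (z : Fin N → ℝ) : ℝ :=
  ∑ j ∈ Finset.univ.filter (fun j : Fin N => N - T ≤ (j : ℕ)), orderStat z j

def subdiff {n : ℕ} (φ : EuclideanSpace ℝ (Fin n) → ℝ) (x : EuclideanSpace ℝ (Fin n)) :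
    Set (EuclideanSpace ℝ (Fin n)) :=
  {s | ∀ y, φ x + ⟪s, y - x⟫ ≤ φ y}

/-!
Write `H = max_{#I = T} ∑_{i ∈ I} f i`. The inclusion `⊇` holds because every active sum
`∑_{i ∈ I} f i` lies below `H` and touches it at `x`. For `⊆`, the right-hand side is compact and
convex, so it suffices to dominate its support function: given `s ∈ ∂H(x)` and a direction `d`,
comparing `H (x + t • d) ≥ H x + t * ⟪s, d⟫` with the finitely many sums as `t → 0⁺` shows that
some active `I` has `⟪s, d⟫ ≤ ∑_{i ∈ I} f_i'(x; d)`, and by Hahn–Banach each one-sided directional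
derivative `f_i'(x; d)` is attained as `⟪g i, d⟫` by a subgradient `g i ∈ ∂f_i(x)`.
-/

open Filter Topology Finset
open scoped Pointwise

lemma sum_le_sum_of_card_eq {ι M : Type*} [AddCommMonoid M] [LinearOrder M]
    [IsOrderedAddMonoid M] [DecidableEq ι] {s t : Finset ι} {f : ι → M} (hst : #s = #t)
    (h : ∀ a ∈ s \ t, ∀ b ∈ t \ s, f a ≤ f b) : ∑ i ∈ s, f i ≤ ∑ i ∈ t, f i := by
  rw [← sum_inter_add_sum_sdiff s t, ← sum_inter_add_sum_sdiff t s, inter_comm t s]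
  gcongr ∑ i ∈ s ∩ t, f i + ?_
  have hcard := card_sdiff_comm hst
  rcases (s \ t).eq_empty_or_nonempty with he | hne
  · rw [he, card_empty, eq_comm, card_eq_zero] at hcard
    rw [he, hcard]
  · obtain ⟨a, ha, hmax⟩ := exists_max_image (s \ t) f hne
    calc ∑ i ∈ s \ t, f i ≤ #(s \ t) • f a := sum_le_card_nsmul _ _ _ hmax
      _ = #(t \ s) • f a := by rw [hcard]
      _ ≤ ∑ i ∈ t \ s, f i := card_nsmul_le_sum _ _ _ (h a ha)

lemma card_filter_sub_le_val {N T : ℕ} (hTN : T ≤ N) :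
    #(univ.filter fun j : Fin N => N - T ≤ (j : ℕ)) = T := by
  have := card_filter_add_card_filter_not (s := univ) fun j : Fin N => (j : ℕ) < N - T
  simp only [not_lt, Fin.card_filter_val_lt, card_univ, Fintype.card_fin] at this
  omega

lemma isGreatest_topSum {N T : ℕ} (hTN : T ≤ N) (z : Fin N → ℝ) :
    IsGreatest ((fun I : Finset (Fin N) => ∑ i ∈ I, z i) '' {I | #I = T}) (topSum T z) := by
  classical
  set σ := Tuple.sort z
  set top := univ.filter fun j : Fin N => N - T ≤ (j : ℕ)
  have htop : topSum T z = ∑ j ∈ top, z (σ j) := rfl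
  refine ⟨⟨top.map σ.toEmbedding, ?_, ?_⟩, ?_⟩
  · exact (card_map _).trans (card_filter_sub_le_val hTN)
  · simp [htop]
  rintro _ ⟨I, hI, rfl⟩
  dsimp only
  have hI' : ∑ i ∈ I, z i = ∑ j ∈ I.map σ.symm.toEmbedding, z (σ j) := by simp
  rw [hI', htop]
  refine sum_le_sum_of_card_eq (by rw [card_map, card_filter_sub_le_val hTN, ← hI]) ?_
  intro a ha b hb
  simp only [top, Finset.mem_sdiff, mem_filter, Finset.mem_univ, true_and] at ha hb
  exact Tuple.monotone_sort z (Fin.le_def.2 (by omega))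

section DirectionalDerivative

variable {E : Type*} [AddCommGroup E] [Module ℝ E] {φ : E → ℝ}

noncomputable def dirDeriv (φ : E → ℝ) (x d : E) : ℝ :=
  derivWithin (fun t : ℝ => φ (x + t • d)) (Set.Ioi 0) 0

lemma ConvexOn.comp_line (hφ : ConvexOn ℝ Set.univ φ) (x d : E) :
    ConvexOn ℝ Set.univ fun t : ℝ => φ (x + t • d) := by
  simpa [Function.comp_def, AffineMap.lineMap_apply, add_comm] using
    hφ.comp_affineMap (AffineMap.lineMap x (x + d))

lemma hasDerivWithinAt_dirDeriv (hφ : ConvexOn ℝ Set.univ φ) (x d : E) :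
    HasDerivWithinAt (fun t : ℝ => φ (x + t • d)) (dirDeriv φ x d) (Set.Ioi 0) 0 :=
  (hφ.comp_line x d).hasDerivWithinAt_rightDeriv_of_mem_interior (by simp)

lemma tendsto_dirDeriv (hφ : ConvexOn ℝ Set.univ φ) (x d : E) :
    Tendsto (fun t : ℝ => (φ (x + t • d) - φ x) / t) (𝓝[>] 0) (𝓝 (dirDeriv φ x d)) := by
  refine ((hasDerivWithinAt_iff_tendsto_slope' (lt_irrefl 0)).1
    (hasDerivWithinAt_dirDeriv hφ x d)).congr' ?_
  filter_upwards with t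
  simp [slope_def_field]

lemma dirDeriv_le_sub (hφ : ConvexOn ℝ Set.univ φ) (x d : E) :
    dirDeriv φ x d ≤ φ (x + d) - φ x := by
  simpa [dirDeriv, slope_def_field] using
    (hφ.comp_line x d).rightDeriv_le_slope (Set.mem_univ 0) (Set.mem_univ 1) one_pos
      (hasDerivWithinAt_dirDeriv hφ x d).differentiableWithinAt

lemma dirDeriv_zero (φ : E → ℝ) (x : E) : dirDeriv φ x 0 = 0 := by
  simp [dirDeriv]

lemma dirDeriv_smul (hφ : ConvexOn ℝ Set.univ φ) (x d : E) {c : ℝ} (hc : 0 < c) :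
    dirDeriv φ x (c • d) = c * dirDeriv φ x d := by
  have hscale : HasDerivWithinAt (fun t : ℝ => c * t) c (Set.Ioi 0) 0 := by
    simpa using (hasDerivWithinAt_id (0 : ℝ) (Set.Ioi 0)).const_mul c
  have h := (hasDerivWithinAt_dirDeriv hφ x d).comp_of_eq 0 hscale
    (fun t ht => mul_pos hc ht) (mul_zero c).symm
  have hline : (fun t : ℝ => φ (x + t • (c • d))) = (fun t => φ (x + t • d)) ∘ fun t => c * t := by
    ext t
    simp [smul_smul, mul_comm]
  rw [dirDeriv, hline, h.derivWithin (uniqueDiffWithinAt_Ioi 0), mul_comm]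

lemma dirDeriv_add_le (hφ : ConvexOn ℝ Set.univ φ) (x d₁ d₂ : E) :
    dirDeriv φ x (d₁ + d₂) ≤ dirDeriv φ x d₁ + dirDeriv φ x d₂ := by
  have hmid : ∀ t > (0 : ℝ), (φ (x + t • (d₁ + d₂)) - φ x) / t ≤
      ((φ (x + t • ((2 : ℝ) • d₁)) - φ x) / t + (φ (x + t • ((2 : ℝ) • d₂)) - φ x) / t) / 2 := by
    intro t ht
    have := hφ.2 (Set.mem_univ (x + t • ((2 : ℝ) • d₁))) (Set.mem_univ (x + t • ((2 : ℝ) • d₂)))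
      (by norm_num : (0 : ℝ) ≤ 1 / 2) (by norm_num : (0 : ℝ) ≤ 1 / 2) (by norm_num)
    rw [show (1 / 2 : ℝ) • (x + t • ((2 : ℝ) • d₁)) + (1 / 2 : ℝ) • (x + t • ((2 : ℝ) • d₂)) =
      x + t • (d₁ + d₂) by module, smul_eq_mul, smul_eq_mul] at this
    field_simp
    linarith
  have hlim := le_of_tendsto_of_tendsto (tendsto_dirDeriv hφ x (d₁ + d₂))
    (((tendsto_dirDeriv hφ x ((2 : ℝ) • d₁)).add (tendsto_dirDeriv hφ x ((2 : ℝ) • d₂))).div_const 2)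
    (eventually_nhdsWithin_of_forall hmid)
  rw [dirDeriv_smul hφ x d₁ two_pos, dirDeriv_smul hφ x d₂ two_pos] at hlim
  linarith

lemma mul_dirDeriv_le (hφ : ConvexOn ℝ Set.univ φ) (x d : E) (c : ℝ) :
    c * dirDeriv φ x d ≤ dirDeriv φ x (c • d) := by
  rcases lt_trichotomy c 0 with hc | rfl | hc
  · have hneg : dirDeriv φ x (c • d) = -c * dirDeriv φ x (-d) := by
      rw [← dirDeriv_smul hφ x (-d) (neg_pos.2 hc), neg_smul_neg]
    have hsum := dirDeriv_add_le hφ x d (-d)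
    rw [add_neg_cancel, dirDeriv_zero] at hsum
    rw [hneg]
    nlinarith
  · simp [dirDeriv_zero]
  · rw [dirDeriv_smul hφ x d hc]

lemma exists_linearMap_le_dirDeriv_eq (hφ : ConvexOn ℝ Set.univ φ) (x d : E) :
    ∃ g : E →ₗ[ℝ] ℝ, (∀ v, g v ≤ dirDeriv φ x v) ∧ g d = dirDeriv φ x d := by
  have hker : ∀ c : ℝ, c • d = 0 → (RingHom.id ℝ) c • dirDeriv φ x d = 0 := by
    intro c hc
    rcases smul_eq_zero.1 hc with rfl | rfl
    · exact zero_smul _ _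
    · rw [dirDeriv_zero, smul_zero]
  set g₀ := LinearPMap.mkSpanSingleton' d (dirDeriv φ x d) hker
  have hd : d ∈ g₀.domain := by
    rw [LinearPMap.domain_mkSpanSingleton]
    exact Submodule.mem_span_singleton_self d
  have hg₀ : ∀ v : g₀.domain, g₀ v ≤ dirDeriv φ x v := by
    rintro ⟨v, hv⟩
    rw [LinearPMap.domain_mkSpanSingleton] at hv
    obtain ⟨c, rfl⟩ := Submodule.mem_span_singleton.1 hv
    rw [LinearPMap.mkSpanSingleton'_apply, RingHom.id_apply, smul_eq_mul]
    exact mul_dirDeriv_le hφ x d c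
  obtain ⟨g, hgext, hgle⟩ := exists_extension_of_le_sublinear g₀ (dirDeriv φ x)
    (fun c hc v => dirDeriv_smul hφ x v hc) (dirDeriv_add_le hφ x) hg₀
  exact ⟨g, hgle, (hgext ⟨d, hd⟩).trans (LinearPMap.mkSpanSingleton'_apply_self _ _ _ _)⟩

end DirectionalDerivative

section Subdifferential

variable {n : ℕ} {φ : EuclideanSpace ℝ (Fin n) → ℝ}

lemma exists_mem_subdiff_inner_eq_dirDeriv (hφ : ConvexOn ℝ Set.univ φ)
    (x d : EuclideanSpace ℝ (Fin n)) : ∃ s ∈ subdiff φ x, ⟪s, d⟫ = dirDeriv φ x d := by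
  obtain ⟨g, hgle, hgd⟩ := exists_linearMap_le_dirDeriv_eq hφ x d
  set s := (InnerProductSpace.toDual ℝ _).symm (LinearMap.toContinuousLinearMap g)
  have hs : ∀ v, ⟪s, v⟫ = g v := fun v => InnerProductSpace.toDual_symm_apply
  refine ⟨s, fun y => ?_, by rw [hs, hgd]⟩
  have h := (hgle (y - x)).trans (dirDeriv_le_sub hφ x (y - x))
  rw [add_sub_cancel] at h
  rw [hs]
  linarith

lemma convex_subdiff (φ : EuclideanSpace ℝ (Fin n) → ℝ) (x : EuclideanSpace ℝ (Fin n)) :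
    Convex ℝ (subdiff φ x) := by
  intro s₁ h₁ s₂ h₂ a b ha hb hab y
  rw [inner_add_left, real_inner_smul_left, real_inner_smul_left]
  linear_combination a * h₁ y + b * h₂ y + (φ y - φ x) * hab

lemma isClosed_subdiff (φ : EuclideanSpace ℝ (Fin n) → ℝ) (x : EuclideanSpace ℝ (Fin n)) :
    IsClosed (subdiff φ x) := by
  simp only [subdiff, Set.ofPred_forall]
  exact isClosed_iInter fun y => isClosed_le (by fun_prop) continuous_const

lemma isCompact_subdiff (hφ : ConvexOn ℝ Set.univ φ) (x : EuclideanSpace ℝ (Fin n)) :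
    IsCompact (subdiff φ x) := by
  have hcont : Continuous φ := continuousOn_univ.1 (hφ.continuousOn isOpen_univ)
  obtain ⟨y₀, -, hy₀⟩ := (isCompact_closedBall x 1).exists_isMaxOn
    (Metric.nonempty_closedBall.2 zero_le_one) hcont.continuousOn
  refine Metric.isCompact_of_isClosed_isBounded (isClosed_subdiff φ x)
    (isBounded_iff_forall_norm_le.2 ⟨φ y₀ - φ x, fun s hs => ?_⟩)
  rcases eq_or_ne s 0 with rfl | hs0
  · simpa using hy₀ (Metric.mem_closedBall_self zero_le_one)
  have hunit : x + ‖s‖⁻¹ • s ∈ Metric.closedBall x 1 := by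
    simp [norm_smul, inv_mul_cancel₀ (norm_ne_zero_iff.2 hs0)]
  have h := hs (x + ‖s‖⁻¹ • s)
  rw [add_sub_cancel_left, real_inner_smul_right, real_inner_self_eq_norm_sq,
    show ‖s‖⁻¹ * ‖s‖ ^ 2 = ‖s‖ by field_simp] at h
  linarith [isMaxOn_iff.1 hy₀ _ hunit]

lemma finsetSum_subdiff_subset {ι : Type*} (I : Finset ι) (f : ι → EuclideanSpace ℝ (Fin n) → ℝ)
    (x : EuclideanSpace ℝ (Fin n)) :
    ∑ i ∈ I, subdiff (f i) x ⊆ subdiff (fun y => ∑ i ∈ I, f i y) x := by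
  intro s hs y
  obtain ⟨g, hg, rfl⟩ := (Set.mem_finsetSum _ _ _).1 hs
  rw [sum_inner, ← sum_add_distrib]
  exact sum_le_sum fun i hi => hg hi y

lemma subdiff_subset_of_le_of_eq {ψ : EuclideanSpace ℝ (Fin n) → ℝ} {x : EuclideanSpace ℝ (Fin n)}
    (hle : ∀ y, φ y ≤ ψ y) (heq : φ x = ψ x) : subdiff φ x ⊆ subdiff ψ x :=
  fun _ hs y => heq ▸ (hs y).trans (hle y)

end Subdifferential

section ConvexHull

variable {E : Type*} [AddCommGroup E] [Module ℝ E] [TopologicalSpace E]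
  [IsTopologicalAddGroup E] [ContinuousSMul ℝ E]

lemma isCompact_convexJoin {s t : Set E} (hs : IsCompact s) (ht : IsCompact t) :
    IsCompact (convexJoin ℝ s t) := by
  have h : convexJoin ℝ s t =
      (fun p : ℝ × E × E => p.1 • p.2.1 + (1 - p.1) • p.2.2) '' (Set.Icc 0 1 ×ˢ s ×ˢ t) := by
    ext y
    simp only [mem_convexJoin, segment, Set.mem_image, Set.mem_prod, Set.mem_Icc, Prod.exists]
    constructor
    · rintro ⟨a, ha, b, hb, u, v, hu, hv, huv, rfl⟩
      exact ⟨u, a, b, ⟨⟨hu, by linarith⟩, ha, hb⟩, by rw [← huv, add_sub_cancel_left]⟩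
    · rintro ⟨u, a, b, ⟨⟨hu₀, hu₁⟩, ha, hb⟩, rfl⟩
      exact ⟨a, ha, b, hb, u, 1 - u, hu₀, by linarith, by ring, rfl⟩
  rw [h]
  exact (isCompact_Icc.prod (hs.prod ht)).image (by fun_prop)

lemma isCompact_convexHull_union {s t : Set E} (hs : IsCompact (convexHull ℝ s))
    (ht : IsCompact (convexHull ℝ t)) : IsCompact (convexHull ℝ (s ∪ t)) := by
  rcases s.eq_empty_or_nonempty with rfl | hs₀
  · rwa [Set.empty_union]
  rcases t.eq_empty_or_nonempty with rfl | ht₀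
  · rwa [Set.union_empty]
  rw [convexHull_union hs₀ ht₀]
  exact isCompact_convexJoin hs ht

lemma Set.Finite.isCompact_convexHull_biUnion {ι : Type*} {S : Set ι} (hS : S.Finite)
    {K : ι → Set E} (hK : ∀ i ∈ S, IsCompact (convexHull ℝ (K i))) :
    IsCompact (convexHull ℝ (⋃ i ∈ S, K i)) := by
  induction S, hS using Set.Finite.induction_on with
  | empty => simp
  | insert _ _ ih =>
    rw [Set.biUnion_insert]
    exact isCompact_convexHull_union (hK _ (Set.mem_insert _ _))
      (ih fun i hi => hK i (Set.mem_insert_of_mem _ hi))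

end ConvexHull

lemma isCompact_finsetSum {ι E : Type*} [AddCommMonoid E] [TopologicalSpace E] [ContinuousAdd E]
    (I : Finset ι) {K : ι → Set E} (hK : ∀ i ∈ I, IsCompact (K i)) : IsCompact (∑ i ∈ I, K i) :=
  Finset.sum_induction _ IsCompact (fun _ _ => IsCompact.add) isCompact_singleton hK

lemma setOf_exists_eq_sum {ι E : Type*} [AddCommMonoid E] (I : Finset ι) (K : ι → Set E) :
    {s | ∃ g : ι → E, (∀ i ∈ I, g i ∈ K i) ∧ s = ∑ i ∈ I, g i} = ∑ i ∈ I, K i := by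
  ext s
  simp [Set.mem_finsetSum, eq_comm]

/-- If every active piece had right derivative `< a`, then for small `t > 0` every piece, hence
also `h`, would lie strictly below the line `h 0 + t * a`. -/
lemma exists_active_le_deriv_of_le_max {ι : Type*} (𝒦 : Finset ι) {g : ι → ℝ → ℝ} {D : ι → ℝ}
    {h : ℝ → ℝ} {a : ℝ} (hg : ∀ k ∈ 𝒦, HasDerivWithinAt (g k) (D k) (Set.Ioi 0) 0)
    (hle : ∀ k ∈ 𝒦, g k 0 ≤ h 0) (hmax : ∀ t > 0, ∃ k ∈ 𝒦, h t ≤ g k t)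
    (hsub : ∀ t > 0, h 0 + t * a ≤ h t) : ∃ k ∈ 𝒦, g k 0 = h 0 ∧ a ≤ D k := by
  by_contra! hlt
  have hbelow : ∀ k ∈ 𝒦, ∀ᶠ t in 𝓝[>] 0, g k t < h 0 + t * a := by
    intro k hk
    rcases (hle k hk).lt_or_eq with hinactive | hactive
    · have hcont : Tendsto (fun t => g k t - t * a) (𝓝[>] 0) (𝓝 (g k 0 - 0 * a)) :=
        (hg k hk).continuousWithinAt.tendsto.sub
          ((tendsto_id.mul_const a).mono_left nhdsWithin_le_nhds)
      filter_upwards [hcont.eventually (gt_mem_nhds (by simpa using hinactive))] with t ht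
      linarith
    · have hslope := (hasDerivWithinAt_iff_tendsto_slope' (lt_irrefl 0)).1 (hg k hk)
      filter_upwards [hslope.eventually (gt_mem_nhds (hlt k hk hactive)), self_mem_nhdsWithin]
        with t hslope_lt (ht : 0 < t)
      rw [slope_def_field, sub_zero, div_lt_iff₀ ht] at hslope_lt
      linarith
  obtain ⟨t, hall, ht⟩ :=
    (((eventually_all_finset 𝒦).2 hbelow).and self_mem_nhdsWithin).exists
  obtain ⟨k, hk, hkt⟩ := hmax t ht
  linarith [hall k hk, hsub t ht]

lemma mem_of_forall_exists_inner_le {E : Type*} [NormedAddCommGroup E] [InnerProductSpace ℝ E]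
    [CompleteSpace E] {C : Set E} (hconv : Convex ℝ C) (hclosed : IsClosed C) {s : E}
    (h : ∀ d, ∃ c ∈ C, ⟪s, d⟫ ≤ ⟪c, d⟫) : s ∈ C := by
  by_contra hs
  obtain ⟨L, u, hLC, hLs⟩ := geometric_hahn_banach_closed_point hconv hclosed hs
  set d := (InnerProductSpace.toDual ℝ E).symm L
  have hd : ∀ v, ⟪d, v⟫ = L v := fun v => InnerProductSpace.toDual_symm_apply
  obtain ⟨c, hc, hsc⟩ := h d
  rw [real_inner_comm d s, real_inner_comm d c, hd, hd] at hsc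
  linarith [hLC c hc]

lemma exists_active_inner_le_sum_dirDeriv {n N T : ℕ} (hTN : T ≤ N)
    {f : Fin N → EuclideanSpace ℝ (Fin n) → ℝ} (hf : ∀ i, ConvexOn ℝ Set.univ (f i))
    {x s : EuclideanSpace ℝ (Fin n)} (hs : s ∈ subdiff (fun y => topSum T fun i => f i y) x)
    (d : EuclideanSpace ℝ (Fin n)) :
    ∃ I : Finset (Fin N), (#I = T ∧ ∑ i ∈ I, f i x = topSum T fun i => f i x) ∧
      ⟪s, d⟫ ≤ ∑ i ∈ I, dirDeriv (f i) x d := by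
  have hmax := fun t : ℝ => isGreatest_topSum hTN fun i => f i (x + t • d)
  obtain ⟨I, hI, hactive, hle⟩ := exists_active_le_deriv_of_le_max (powersetCard T univ)
    (g := fun I t => ∑ i ∈ I, f i (x + t • d)) (h := fun t => topSum T fun i => f i (x + t • d))
    (fun I _ => HasDerivWithinAt.fun_sum fun i _ => hasDerivWithinAt_dirDeriv (hf i) x d)
    (fun I hI => (hmax 0).2 ⟨I, (mem_powersetCard.1 hI).2, rfl⟩)
    (fun t _ => by
      obtain ⟨I, hI, hIt⟩ := (hmax t).1
      exact ⟨I, mem_powersetCard.2 ⟨subset_univ I, hI⟩, hIt.ge⟩)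
    (fun t _ => by simpa [real_inner_smul_right] using hs (x + t • d))
  exact ⟨I, ⟨(mem_powersetCard.1 hI).2, by simpa using hactive⟩, hle⟩

theorem stmt4_general (n N T : ℕ) (hTN : T ≤ N)
    (f : Fin N → EuclideanSpace ℝ (Fin n) → ℝ)
    (hf : ∀ i, ConvexOn ℝ Set.univ (f i)) (x : EuclideanSpace ℝ (Fin n)) :
    subdiff (fun y => topSum T (fun i => f i y)) x =
      convexHull ℝ (⋃ I ∈ {I : Finset (Fin N) |
            I.card = T ∧ ∑ i ∈ I, f i x = topSum T (fun i => f i x)},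
        {s : EuclideanSpace ℝ (Fin n) | ∃ g : Fin N → EuclideanSpace ℝ (Fin n),
          (∀ i ∈ I, g i ∈ subdiff (f i) x) ∧ s = ∑ i ∈ I, g i}) := by
  simp only [setOf_exists_eq_sum]
  refine subset_antisymm (fun s hs => ?_) ?_
  · refine mem_of_forall_exists_inner_le (convex_convexHull ℝ _)
      ((Set.toFinite _).isCompact_convexHull_biUnion fun I _ => ?_).isClosed fun d => ?_
    · rw [(convex_sum _ fun i _ => convex_subdiff (f i) x).convexHull_eq]
      exact isCompact_finsetSum I fun i _ => isCompact_subdiff (hf i) x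
    obtain ⟨I, hI, hsI⟩ := exists_active_inner_le_sum_dirDeriv hTN hf hs d
    choose g hg hgd using fun i => exists_mem_subdiff_inner_eq_dirDeriv (hf i) x d
    refine ⟨∑ i ∈ I, g i, subset_convexHull ℝ _ (Set.mem_biUnion hI
      ((Set.mem_finsetSum _ _ _).2 ⟨g, fun _ => hg _, rfl⟩)), ?_⟩
    simpa [sum_inner, hgd] using hsI
  · refine convexHull_min (Set.iUnion₂_subset fun I hI => ?_) (convex_subdiff _ x)
    exact (finsetSum_subdiff_subset I f x).trans (subdiff_subset_of_le_of_eq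
      (fun y => (isGreatest_topSum hTN _).2 ⟨I, hI.1, rfl⟩) hI.2)

/-- for convex `f_1,…,f_N` and `H(x)` the sum of the `T` largest values among
`f_1(x),…,f_N(x)`, the subdifferential `∂H(x)` is the convex hull, over all active index sets
`I` (`|I| = T` and `∑_{i∈I} f_i(x) = H(x)`), of the Minkowski sums `∑_{i∈I} ∂f_i(x)`. -/
theorem stmt4 (n N T : ℕ) (hT1 : 1 ≤ T) (hTN : T ≤ N)
    (f : Fin N → EuclideanSpace ℝ (Fin n) → ℝ)
    (hf : ∀ i, ConvexOn ℝ Set.univ (f i)) (x : EuclideanSpace ℝ (Fin n)) :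
    subdiff (fun y => topSum T (fun i => f i y)) x =
      convexHull ℝ (⋃ I ∈ {I : Finset (Fin N) |
            I.card = T ∧ ∑ i ∈ I, f i x = topSum T (fun i => f i x)},
        {s : EuclideanSpace ℝ (Fin n) | ∃ g : Fin N → EuclideanSpace ℝ (Fin n),
          (∀ i ∈ I, g i ∈ subdiff (f i) x) ∧ s = ∑ i ∈ I, g i}) :=
  stmt4_general n N T hTN f hf x
end

section
/- Let g, h : ℝ^n → ℝ be convex with g ρ-strongly convex for some ρ ≥ 0, let f = g − h, let β ≥ 0, and let S ⊆ ℝ^n be a convex set. Fix x ∈ S and s_h ∈ ∂h(x), and suppose x⁺ ∈ S minimizes the function u ↦ g(u) − ⟨s_h, u − x⟩ + (β/2)‖u − x‖² over S. Then f(x⁺) ≤ f(x) − ((ρ+β)/2)‖x⁺ − x‖². -/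
/-!
The proximal model `F u = g u - ⟪s_h, u - x⟫ + β / 2 * ‖u - x‖ ^ 2` is `(ρ + β)`-strongly convex,
so its minimizer `x⁺` over `S` grows quadratically: `F x⁺ + (ρ + β) / 2 * ‖x - x⁺‖ ^ 2 ≤ F x = g x`.
The subgradient inequality `h x + ⟪s_h, x⁺ - x⟫ ≤ h x⁺` turns this into the decrease of `g - h`,
with `β / 2 * ‖x⁺ - x‖ ^ 2` to spare.
-/

open scoped RealInnerProductSpace

open Filter Set Topology

theorem StrongConvexOn.add_mul_norm_sub_sq_le_of_isMinOn {E : Type*} [NormedAddCommGroup E]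
    [NormedSpace ℝ E] {s : Set E} {m : ℝ} {f : E → ℝ} {x y : E} (hf : StrongConvexOn s m f)
    (hmin : IsMinOn f s x) (hx : x ∈ s) (hy : y ∈ s) :
    f x + m / 2 * ‖y - x‖ ^ 2 ≤ f y := by
  set c := m / 2 * ‖y - x‖ ^ 2
  have hsegment : ∀ t ∈ Ioo (0 : ℝ) 1, f x + (1 - t) * c ≤ f y := by
    rintro t ⟨ht0, ht1⟩
    have hmem : (1 - t) • x + t • y ∈ s := hf.1 hx hy (by linarith) ht0.le (by ring)
    have hmin_t := isMinOn_iff.1 hmin _ hmem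
    have hconv_t := hf.2 hx hy (by linarith : 0 ≤ 1 - t) ht0.le (by ring)
    rw [norm_sub_rev, smul_eq_mul, smul_eq_mul] at hconv_t
    have : t * (f x + (1 - t) * c) ≤ t * f y := by linear_combination hmin_t + hconv_t
    exact le_of_mul_le_mul_left this ht0
  have hlim : Tendsto (fun t : ℝ ↦ f x + (1 - t) * c) (𝓝[>] 0) (𝓝 (f x + c)) := by
    have hcont : Continuous fun t : ℝ ↦ f x + (1 - t) * c := by fun_prop
    simpa using tendsto_nhdsWithin_of_tendsto_nhds (hcont.tendsto 0)
  exact le_of_tendsto hlim (eventually_of_mem (Ioo_mem_nhdsGT one_pos) hsegment)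

section InnerProductSpace

variable {E : Type*} [NormedAddCommGroup E] [InnerProductSpace ℝ E] {s : Set E} {m : ℝ}
  {f : E → ℝ}

theorem ConvexOn.add_inner_add_const (hf : ConvexOn ℝ s f) (a : E) (k : ℝ) :
    ConvexOn ℝ s (fun u ↦ f u + ⟪a, u⟫ + k) :=
  (hf.add ((innerₛₗ ℝ a).convexOn hf.1)).add_const k

theorem StrongConvexOn.sub_inner_sub (hf : StrongConvexOn s m f) (a c : E) :
    StrongConvexOn s m (fun u ↦ f u - ⟪a, u - c⟫) := by
  have hshift : (fun u ↦ f u - ⟪a, u - c⟫ - m / 2 * ‖u‖ ^ 2) =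
      fun u ↦ (f u - m / 2 * ‖u‖ ^ 2) + ⟪-a, u⟫ + ⟪a, c⟫ := by
    funext u
    rw [inner_sub_right, inner_neg_left]
    ring
  rw [strongConvexOn_iff_convex, hshift]
  exact (strongConvexOn_iff_convex.1 hf).add_inner_add_const _ _

theorem StrongConvexOn.add_mul_norm_sub_sq (hf : StrongConvexOn s m f) (β : ℝ) (c : E) :
    StrongConvexOn s (m + β) (fun u ↦ f u + β / 2 * ‖u - c‖ ^ 2) := by
  have hshift : (fun u ↦ f u + β / 2 * ‖u - c‖ ^ 2 - (m + β) / 2 * ‖u‖ ^ 2) =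
      fun u ↦ (f u - m / 2 * ‖u‖ ^ 2) + ⟪-(β • c), u⟫ + β / 2 * ‖c‖ ^ 2 := by
    funext u
    rw [norm_sub_sq_real, inner_neg_left, real_inner_smul_left, real_inner_comm]
    ring
  rw [strongConvexOn_iff_convex, hshift]
  exact (strongConvexOn_iff_convex.1 hf).add_inner_add_const _ _

end InnerProductSpace

theorem stmt7_general (n : ℕ) (g h : EuclideanSpace ℝ (Fin n) → ℝ) (ρ β : ℝ)
    (hβ : 0 ≤ β)
    (hgstrong : ConvexOn ℝ Set.univ (fun y => g y - ρ / 2 * ‖y‖ ^ 2))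
    (S : Set (EuclideanSpace ℝ (Fin n))) (hS : Convex ℝ S)
    (x : EuclideanSpace ℝ (Fin n)) (hxS : x ∈ S)
    (sh : EuclideanSpace ℝ (Fin n)) (hsh : sh ∈ subdiff h x)
    (xp : EuclideanSpace ℝ (Fin n)) (hxpS : xp ∈ S)
    (hmin : ∀ u ∈ S,
      g xp - ⟪sh, xp - x⟫ + β / 2 * ‖xp - x‖ ^ 2 ≤ g u - ⟪sh, u - x⟫ + β / 2 * ‖u - x‖ ^ 2) :
    g xp - h xp ≤ (g x - h x) - (ρ + β) / 2 * ‖xp - x‖ ^ 2 := by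
  have hg : StrongConvexOn S ρ g :=
    strongConvexOn_iff_convex.2 (hgstrong.subset (subset_univ S) hS)
  have hmodel := ((hg.sub_inner_sub sh x).add_mul_norm_sub_sq β x).add_mul_norm_sub_sq_le_of_isMinOn
    (isMinOn_iff.2 hmin) hxpS hxS
  have hsubgradient : h x + ⟪sh, xp - x⟫ ≤ h xp := hsh xp
  have hprox_nonneg : 0 ≤ β / 2 * ‖xp - x‖ ^ 2 := by positivity
  simp only [sub_self, inner_zero_right, norm_zero, sub_zero] at hmodel
  rw [norm_sub_rev x xp] at hmodel
  linarith

/-- sufficient decrease of one proximal DC iteration: if `g` is `ρ`-strongly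
convex, `h` is convex, `f = g - h`, `β ≥ 0`, `x ∈ S`, `s_h ∈ ∂h(x)` and `x⁺ ∈ S` minimizes
`u ↦ g(u) - ⟨s_h, u - x⟩ + (β/2)‖u - x‖²` over the convex set `S`, then
`f(x⁺) ≤ f(x) - ((ρ+β)/2)‖x⁺ - x‖²`. -/
theorem stmt7 (n : ℕ) (g h : EuclideanSpace ℝ (Fin n) → ℝ) (ρ β : ℝ)
    (hρ : 0 ≤ ρ) (hβ : 0 ≤ β)
    (hg : ConvexOn ℝ Set.univ g)
    (hgstrong : ConvexOn ℝ Set.univ (fun y => g y - ρ / 2 * ‖y‖ ^ 2))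
    (hh : ConvexOn ℝ Set.univ h)
    (S : Set (EuclideanSpace ℝ (Fin n))) (hS : Convex ℝ S)
    (x : EuclideanSpace ℝ (Fin n)) (hxS : x ∈ S)
    (sh : EuclideanSpace ℝ (Fin n)) (hsh : sh ∈ subdiff h x)
    (xp : EuclideanSpace ℝ (Fin n)) (hxpS : xp ∈ S)
    (hmin : ∀ u ∈ S,
      g xp - ⟪sh, xp - x⟫ + β / 2 * ‖xp - x‖ ^ 2 ≤ g u - ⟪sh, u - x⟫ + β / 2 * ‖u - x‖ ^ 2) :
    g xp - h xp ≤ (g x - h x) - (ρ + β) / 2 * ‖xp - x‖ ^ 2 :=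
  stmt7_general n g h ρ β hβ hgstrong S hS x hxS sh hsh xp hxpS hmin
end

section
/- Let X = {x ∈ ℝ^n : ⟨a_i, x⟩ + b_i = 0 for i ∈ E, ω_i(x) ≤ 0 for i ∈ I} be nonempty, where E and I are finite index sets, a_i ∈ ℝ^n, b_i ∈ ℝ, and each ω_i : ℝ^n → ℝ is convex and continuously differentiable. Let g, h, G, H : ℝ^n → ℝ be convex with g ρ-strongly convex (ρ ≥ 0), let f = g − h, and let β ≥ 0 with ρ + β > 0. Assume the generalized MFCQ: for every x ∈ X with G(x) ≤ H(x) there exists y ∈ X such that ⟨∇ω_i(x), y − x⟩ < 0 for every i ∈ I with ω_i(x) = 0, and, whenever G(x) = H(x), also G(y) − H(x) − ⟨s_H, y − x⟩ < 0 for every s_H ∈ ∂H(x). Let x^0 ∈ X satisfy G(x^0) ≤ H(x^0), assume the level set {x ∈ X : G(x) ≤ H(x), f(x) ≤ f(x^0)} is bounded, and suppose that for each k ≥ 0 there are s_h^k ∈ ∂h(x^k) and s_H^k ∈ ∂H(x^k) such that x^{k+1} minimizes u ↦ g(u) − ⟨s_h^k, u − x^k⟩ + (β/2)‖u − x^k‖²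 over {u ∈ X : G(u) − H(x^k) − ⟨s_H^k, u − x^k⟩ ≤ 0}. Then every accumulation point x* of (x^k) satisfies: x* ∈ X, G(x*) ≤ H(x*), and there exists λ* ≥ 0 with λ*(G(x*) − H(x*)) = 0 and 0 ∈ ∂g(x*) − ∂h(x*) + λ*(∂G(x*) − ∂H(x*)) + N_X(x*); i.e., x* is a KKT point of min{g(x) − h(x) : x ∈ X, G(x) − H(x) ≤ 0}. -/
/-!
The strong convexity of the proximal subproblems makes `g - h` drop by
`(ρ + β) / 4 * ‖x (k + 1) - x k‖ ^ 2` at every step, while the linearized constraint keeps every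
iterate feasible (`H` lies above its linearization). Hence the iterates stay in the bounded level
set and the steps tend to zero. Subdifferentials of finite convex functions are locally bounded
and have closed graph, so along a further subsequence the chosen subgradients converge to
subgradients at `x*`, and passing to the limit in the optimality of `x (k + 1)` shows that `x*`
minimizes the limiting subproblem over the points where its linearized constraint is negative.
The MFCQ provides a Slater point for that constraint, so separating in `ℝ × ℝ` yields a Lagrange
multiplier; separating the epigraphs of the pieces of the Lagrangian in `ℝⁿ × ℝ` then splits the
optimality of `x*` into subgradients of `g` and `G` and a normal vector to `X`.
-/

open scoped RealInnerProductSpace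
open Filter

/-- The normal cone of the convex set `X` at `x`. -/
def normalCone {n : ℕ} (X : Set (EuclideanSpace ℝ (Fin n))) (x : EuclideanSpace ℝ (Fin n)) :
    Set (EuclideanSpace ℝ (Fin n)) :=
  {v | ∀ y ∈ X, ⟪v, y - x⟫ ≤ 0}

open Set Topology

lemma nonpos_of_forall_add_mul_nonpos {A B : ℝ} (h : ∀ ε ∈ Ioc (0 : ℝ) 1, A + ε * B ≤ 0) :
    A ≤ 0 := by
  have hlim : Tendsto (fun ε : ℝ => A + ε * B) (𝓝[>] 0) (𝓝 A) := by
    have hc : Continuous fun ε : ℝ => A + ε * B := by fun_prop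
    simpa using (hc.tendsto 0).mono_left nhdsWithin_le_nhds
  exact le_of_tendsto hlim (eventually_of_mem (Ioc_mem_nhdsGT zero_lt_one) h)

lemma nonpos_of_forall_mul_add_neg {c K : ℝ} (h : ∀ a : ℝ, 0 < a → c * a + K < 0) : c ≤ 0 := by
  by_contra! hc
  have := h ((|K| + 1) / c) (by positivity)
  rw [mul_div_cancel₀ _ hc.ne'] at this
  linarith [neg_abs_le K]

lemma tendsto_zero_of_add_mul_le {u d : ℕ → ℝ} {c : ℝ} (hc : 0 < c) (hd : ∀ k, 0 ≤ d k)
    (hdesc : ∀ k, u (k + 1) + c * d k ≤ u k) (hbdd : BddBelow (range u)) :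
    Tendsto d atTop (𝓝 0) := by
  obtain ⟨L, hL⟩ := hbdd
  have hsum : ∀ N, ∑ k ∈ Finset.range N, d k ≤ (u 0 - L) / c := by
    intro N
    have htel : c * ∑ k ∈ Finset.range N, d k ≤ u 0 - u N := by
      induction N with
      | zero => simp
      | succ N ih => rw [Finset.sum_range_succ, mul_add]; linarith [hdesc N]
    rw [le_div_iff₀ hc]
    linarith [hL (mem_range_self N)]
  exact (summable_of_sum_range_le hd hsum).tendsto_atTop_zero

section Convex

variable {E : Type*} [AddCommGroup E] [Module ℝ E]

lemma ConvexOn.apply_smul_add_smul_lt {s : Set E} {f : E → ℝ} (hf : ConvexOn ℝ s f) {x y : E}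
    {r r' a b : ℝ} (hx : x ∈ s) (hy : y ∈ s) (hr : f x < r) (hr' : f y < r') (ha : 0 ≤ a)
    (hb : 0 ≤ b) (hab : a + b = 1) : f (a • x + b • y) < a * r + b * r' := by
  have h := convex_Ioi (0 : ℝ) (sub_pos.2 hr) (sub_pos.2 hr') ha hb hab
  have hcomb := hf.2 hx hy ha hb hab
  simp only [mem_Ioi, smul_eq_mul] at h hcomb
  linarith

lemma ConvexOn.convex_strictEpigraph {s : Set E} {f : E → ℝ} (hf : ConvexOn ℝ s f) :
    Convex ℝ {z : E × ℝ | z.1 ∈ s ∧ f z.1 < z.2} := fun _ hz _ hw _ _ ha hb hab =>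
  ⟨hf.1 hz.1 hw.1 ha hb hab, hf.apply_smul_add_smul_lt hz.1 hw.1 hz.2 hw.2 ha hb hab⟩

lemma convex_biUnion_Ioi_prod_Ioi {X : Set E} {f g : E → ℝ} (hf : ConvexOn ℝ X f)
    (hg : ConvexOn ℝ X g) : Convex ℝ (⋃ u ∈ X, Ioi (f u) ×ˢ Ioi (g u)) := by
  intro p hp q hq a b ha hb hab
  simp only [mem_iUnion₂, mem_prod, mem_Ioi] at hp hq ⊢
  obtain ⟨u, hu, hpu⟩ := hp
  obtain ⟨v, hv, hqv⟩ := hq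
  exact ⟨a • u + b • v, hf.1 hu hv ha hb hab,
    hf.apply_smul_add_smul_lt hu hv hpu.1 hqv.1 ha hb hab,
    hg.apply_smul_add_smul_lt hu hv hpu.2 hqv.2 ha hb hab⟩

theorem exists_lagrange_multiplier_of_slater {X : Set E} {F ψ : E → ℝ} (hF : ConvexOn ℝ X F)
    (hψ : ConvexOn ℝ X ψ) {x y : E} (hx : x ∈ X) (hψx : ψ x ≤ 0) (hy : y ∈ X) (hψy : ψ y < 0)
    (hmin : ∀ u ∈ X, ψ u < 0 → F x ≤ F u) :
    ∃ lam : ℝ, 0 ≤ lam ∧ lam * ψ x = 0 ∧ ∀ u ∈ X, F x ≤ F u + lam * ψ u := by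
  set M : Set (ℝ × ℝ) := ⋃ u ∈ X, Ioi (ψ u) ×ˢ Ioi (F u)
  have hxM : (0, F x) ∉ M := by
    simp only [M, mem_iUnion₂, mem_prod, mem_Ioi, not_exists, not_and, not_lt]
    exact hmin
  obtain ⟨ℓ, c, hℓM, hc⟩ := geometric_hahn_banach_open (convex_biUnion_Ioi_prod_Ioi hψ hF)
    (isOpen_biUnion fun _ _ => isOpen_Ioi.prod isOpen_Ioi) (convex_singleton (0, F x))
    (disjoint_singleton_right.2 hxM)
  have hℓ : ∀ r t : ℝ, ℓ (r, t) = ℓ (1, 0) * r + ℓ (0, 1) * t := fun r t => by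
    rw [show ((r, t) : ℝ × ℝ) = r • (1, 0) + t • (0, 1) by simp, map_add, map_smul, map_smul,
      smul_eq_mul, smul_eq_mul, mul_comm r, mul_comm t]
  set c₁ := ℓ (1, 0)
  set c₂ := ℓ (0, 1)
  have hc := hc _ rfl
  rw [hℓ] at hc
  have hkey : ∀ u ∈ X, ∀ a b : ℝ, 0 < a → 0 < b → c₁ * (ψ u + a) + c₂ * (F u - F x + b) < 0 :=
    fun u hu a b ha hb => by
      have := hℓM (ψ u + a, F u + b)
        (mem_biUnion hu ⟨lt_add_of_pos_right _ ha, lt_add_of_pos_right _ hb⟩)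
      rw [hℓ] at this
      linarith
  have hc₁ : c₁ ≤ 0 := nonpos_of_forall_mul_add_neg (K := c₁ * ψ y + c₂ * (F y - F x + 1))
    fun a ha => by linarith [hkey y hy a 1 ha one_pos]
  have hc₂ : c₂ ≤ 0 := nonpos_of_forall_mul_add_neg (K := c₁ * (ψ y + 1) + c₂ * (F y - F x))
    fun b hb => by linarith [hkey y hy 1 b one_pos hb]
  have hlin : ∀ u ∈ X, c₁ * ψ u + c₂ * (F u - F x) ≤ 0 := fun u hu =>
    nonpos_of_forall_add_mul_nonpos (B := c₁ + c₂) fun ε hε => by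
      linarith [hkey u hu ε ε hε.1 hε.1]
  -- the Slater point rules out a vertical separating line
  have hc₂neg : c₂ < 0 := by
    refine hc₂.lt_of_ne fun h₂ => ?_
    have h₁ : c₁ = 0 := le_antisymm hc₁
      (nonneg_of_mul_nonpos_left (by simpa [h₂] using hlin y hy) hψy)
    simpa [h₁, h₂] using hkey y hy 1 1 one_pos one_pos
  have hlag : ∀ u ∈ X, F x ≤ F u + c₁ / c₂ * ψ u := fun u hu => by
    have : c₂ * (F u + c₁ / c₂ * ψ u - F x) ≤ 0 := by
      linear_combination hlin u hu + ψ u * div_mul_cancel₀ c₁ hc₂neg.ne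
    linarith [nonneg_of_mul_nonpos_right this hc₂neg]
  have hlam : 0 ≤ c₁ / c₂ := div_nonneg_of_nonpos hc₁ hc₂
  exact ⟨c₁ / c₂, hlam, le_antisymm (mul_nonpos_of_nonneg_of_nonpos hlam hψx)
    (by linarith [hlag x hx]), hlag⟩

end Convex

section Normed

variable {F : Type*} [NormedAddCommGroup F] [NormedSpace ℝ F]

lemma StrongConvexOn.subset {s t : Set F} {m : ℝ} {f : F → ℝ} (hf : StrongConvexOn t m f)
    (hst : s ⊆ t) (hs : Convex ℝ s) : StrongConvexOn s m f :=
  ⟨hs, fun _ hx _ hy => hf.2 (hst hx) (hst hy)⟩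

lemma StrongConvexOn.add_le_of_isMinOn {s : Set F} {m : ℝ} {f : F → ℝ} {z u : F}
    (hf : StrongConvexOn s m f) (hmin : IsMinOn f s z) (hz : z ∈ s) (hu : u ∈ s) :
    f z + m / 4 * ‖u - z‖ ^ 2 ≤ f u := by
  have hmid := hf.2 hu hz (by norm_num : (0 : ℝ) ≤ 1 / 2) (by norm_num : (0 : ℝ) ≤ 1 / 2)
    (by norm_num)
  have hle := isMinOn_iff.1 hmin _ (hf.1 hu hz (by norm_num : (0 : ℝ) ≤ 1 / 2)
    (by norm_num : (0 : ℝ) ≤ 1 / 2) (by norm_num))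
  simp only [smul_eq_mul] at hmid
  linarith

lemma ConvexOn.le_of_forall_le_add_mul_norm_sub_sq {X : Set F} {f : F → ℝ} {x : F} {c : ℝ}
    (hf : ConvexOn ℝ X f) (hx : x ∈ X) (h : ∀ u ∈ X, f x ≤ f u + c * ‖u - x‖ ^ 2)
    {u : F} (hu : u ∈ X) : f x ≤ f u := by
  suffices f x - f u ≤ 0 by linarith
  -- at `x + ε • (u - x)` the quadratic term is of order `ε ^ 2`, the gain `f x - f u` of order `ε`
  refine nonpos_of_forall_add_mul_nonpos (B := -(c * ‖u - x‖ ^ 2)) fun ε hε => ?_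
  have hmem : (1 - ε) • x + ε • u ∈ X := hf.1 hx hu (by linarith [hε.2]) hε.1.le (by ring)
  have hconv := hf.2 hx hu (by linarith [hε.2] : (0 : ℝ) ≤ 1 - ε) hε.1.le (by ring)
  have hval := h _ hmem
  have hdiff : (1 - ε) • x + ε • u - x = ε • (u - x) := by module
  rw [hdiff, norm_smul, Real.norm_of_nonneg hε.1.le] at hval
  simp only [smul_eq_mul] at hconv
  refine nonpos_of_mul_nonpos_right ?_ hε.1
  linarith

end Normed

section InnerProduct

variable {F : Type*} [NormedAddCommGroup F] [InnerProductSpace ℝ F]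

lemma convexOn_inner_sub {C : Set F} (hC : Convex ℝ C) (w x : F) :
    ConvexOn ℝ C fun u => ⟪w, u - x⟫ := by
  refine ⟨hC, fun u _ v _ a b _ _ hab => le_of_eq ?_⟩
  dsimp only
  rw [smul_eq_mul, smul_eq_mul, ← real_inner_smul_right, ← real_inner_smul_right,
    ← inner_add_right]
  obtain rfl := eq_sub_of_add_eq' hab
  congr 1
  module

lemma convex_constraintSet {ι κ : Type*} (a : ι → F) (b : ι → ℝ) {ω : κ → F → ℝ}
    (hω : ∀ i, ConvexOn ℝ univ (ω i)) :
    Convex ℝ {x | (∀ i, ⟪a i, x⟫ + b i = 0) ∧ ∀ i, ω i x ≤ 0} := by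
  intro u hu v hv s t hs ht hst
  refine ⟨fun i => ?_, fun i => ?_⟩
  · rw [inner_add_right, real_inner_smul_right, real_inner_smul_right]
    linear_combination s * hu.1 i + t * hv.1 i - b i * hst
  · have := (hω i).2 (mem_univ u) (mem_univ v) hs ht hst
    simp only [smul_eq_mul] at this
    nlinarith [mul_nonpos_of_nonneg_of_nonpos hs (hu.2 i),
      mul_nonpos_of_nonneg_of_nonpos ht (hv.2 i)]

lemma isClosed_constraintSet {ι κ : Type*} [FiniteDimensional ℝ F] (a : ι → F) (b : ι → ℝ)
    {ω : κ → F → ℝ} (hω : ∀ i, ConvexOn ℝ univ (ω i)) :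
    IsClosed {x | (∀ i, ⟪a i, x⟫ + b i = 0) ∧ ∀ i, ω i x ≤ 0} := by
  simp only [ofPred_and, ofPred_forall]
  exact (isClosed_iInter fun i => isClosed_eq (by fun_prop) continuous_const).inter
    (isClosed_iInter fun i => isClosed_le (hω i).locallyLipschitz.continuous continuous_const)

lemma exists_inner_add_mul_eq [CompleteSpace F] (f : F × ℝ →L[ℝ] ℝ) :
    ∃ w : F, ∃ α : ℝ, ∀ u t, f (u, t) = ⟪w, u⟫ + t * α := by
  refine ⟨(InnerProductSpace.toDual ℝ F).symm (f.comp (.inl ℝ F ℝ)), f (0, 1), fun u t => ?_⟩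
  rw [InnerProductSpace.toDual_symm_apply, show ((u, t) : F × ℝ) = (u, 0) + t • (0, 1) by simp,
    map_add, map_smul, smul_eq_mul]
  rfl

theorem exists_inner_le_mul_of_forall_add_le [CompleteSpace F] {p q : F → ℝ} {C : Set F} {x : F}
    (hp : ConvexOn ℝ univ p) (hpc : Continuous p) (hq : ConvexOn ℝ C q) (hx : x ∈ C)
    (hmin : ∀ u ∈ C, p x + q x ≤ p u + q u) :
    ∃ w : F, ∃ μ > 0, (∀ u, ⟪w, u - x⟫ ≤ μ * (p u - p x)) ∧
      ∀ u ∈ C, μ * (q x - q u) ≤ ⟪w, u - x⟫ := by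
  -- separate the strict epigraph of `p` from the hypograph of `p x + q x - q` over `C`
  set A : Set (F × ℝ) := {z | z.1 ∈ univ ∧ p z.1 < z.2}
  set B : Set (F × ℝ) := {z | z.1 ∈ C ∧ z.2 ≤ p x + q x - q z.1}
  have hAB : Disjoint A B := disjoint_left.2 fun z hzA hzB => by
    linarith [hmin z.1 hzB.1, hzA.2, hzB.2]
  obtain ⟨f, c, hfA, hfB⟩ := geometric_hahn_banach_open hp.convex_strictEpigraph
    ((isOpen_univ.preimage continuous_fst).inter (isOpen_lt (by fun_prop) continuous_snd))
    ((concaveOn_const (p x + q x) hq.1).sub hq).convex_hypograph hAB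
  obtain ⟨w, α, hf⟩ := exists_inner_add_mul_eq f
  have hA : ∀ u, ∀ ε > 0, ⟪w, u⟫ + (p u + ε) * α < c := fun u ε hε =>
    hf u _ ▸ hfA (u, p u + ε) ⟨mem_univ u, lt_add_of_pos_right _ hε⟩
  have hB : ∀ u ∈ C, c ≤ ⟪w, u⟫ + (p x + q x - q u) * α := fun u hu =>
    hf u _ ▸ hfB (u, p x + q x - q u) ⟨hu, le_rfl⟩
  have hcx : c = ⟪w, x⟫ + p x * α := by
    refine le_antisymm (by simpa using hB x hx) ?_
    refine sub_nonpos.1 <| nonpos_of_forall_add_mul_nonpos (B := α) fun ε hε => ?_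
    linarith [hA x ε hε.1]
  refine ⟨w, -α, ?_, fun u => ?_, fun u hu => ?_⟩
  · linarith [hA x 1 one_pos]
  · refine sub_nonpos.1 <| nonpos_of_forall_add_mul_nonpos (B := α) fun ε hε => ?_
    rw [inner_sub_right]
    linarith [hA u ε hε.1]
  · rw [inner_sub_right]
    linarith [hB u hu]

end InnerProduct

section Euclidean

variable {n : ℕ}

local notation "ℝⁿ" => EuclideanSpace ℝ (Fin n)

theorem exists_mem_subdiff_forall_le_add_inner {p q : ℝⁿ → ℝ} {C : Set ℝⁿ} {x : ℝⁿ}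
    (hp : ConvexOn ℝ univ p) (hq : ConvexOn ℝ C q) (hx : x ∈ C)
    (hmin : ∀ u ∈ C, p x + q x ≤ p u + q u) :
    ∃ s ∈ subdiff p x, ∀ u ∈ C, q x ≤ q u + ⟪s, u - x⟫ := by
  obtain ⟨w, μ, hμ, hwp, hwq⟩ :=
    exists_inner_le_mul_of_forall_add_le hp hp.locallyLipschitz.continuous hq hx hmin
  refine ⟨μ⁻¹ • w, fun y => ?_, fun u hu => ?_⟩
  · have := (inv_mul_le_iff₀ hμ).2 (hwp y)
    rw [real_inner_smul_left]
    linarith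
  · have := (le_inv_mul_iff₀ hμ).2 (hwq u hu)
    rw [real_inner_smul_left]
    linarith

theorem subdiff_nonempty {p : ℝⁿ → ℝ} (hp : ConvexOn ℝ univ p) (x : ℝⁿ) :
    (subdiff p x).Nonempty :=
  let ⟨s, hs, _⟩ := exists_mem_subdiff_forall_le_add_inner hp (convexOn_const 0
    (convex_singleton x)) (mem_singleton x) fun u hu => by rw [mem_singleton_iff.1 hu]
  ⟨s, hs⟩

theorem exists_mem_subdiff_forall_le_add_mul_inner {p q : ℝⁿ → ℝ} {C : Set ℝⁿ} {x : ℝⁿ} {c : ℝ}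
    (hc : 0 ≤ c) (hp : ConvexOn ℝ univ p) (hq : ConvexOn ℝ C q) (hx : x ∈ C)
    (hmin : ∀ u ∈ C, c * p x + q x ≤ c * p u + q u) :
    ∃ s ∈ subdiff p x, ∀ u ∈ C, q x ≤ q u + c * ⟪s, u - x⟫ := by
  obtain rfl | hc := hc.eq_or_lt
  · obtain ⟨s, hs⟩ := subdiff_nonempty hp x
    exact ⟨s, hs, fun u hu => by simpa using hmin u hu⟩
  obtain ⟨s, hs, hsq⟩ := exists_mem_subdiff_forall_le_add_inner (hp.smul hc.le) hq hx hmin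
  refine ⟨c⁻¹ • s, fun y => ?_, fun u hu => ?_⟩
  · have := hs y
    rw [real_inner_smul_left, ← le_sub_iff_add_le', inv_mul_le_iff₀ hc]
    simp only [smul_eq_mul] at this
    linarith
  · rw [real_inner_smul_left, mul_inv_cancel_left₀ hc.ne']
    exact hsq u hu

theorem isBounded_biUnion_subdiff {p : ℝⁿ → ℝ} (hp : ConvexOn ℝ univ p) {K : Set ℝⁿ}
    (hK : Bornology.IsBounded K) : Bornology.IsBounded (⋃ z ∈ K, subdiff p z) := by
  obtain ⟨R, hR⟩ := hK.subset_closedBall 0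
  obtain ⟨A, hA⟩ := (isCompact_closedBall (0 : ℝⁿ) (R + 1)).exists_bound_of_continuousOn
    hp.locallyLipschitz.continuous.continuousOn
  refine (Metric.isBounded_closedBall (x := 0) (r := 2 * A)).subset ?_
  simp only [iUnion_subset_iff]
  intro z hz s hs
  have hzR : ‖z‖ ≤ R := by simpa using hR hz
  have hzA : |p z| ≤ A := hA z (by simp; linarith)
  rw [mem_closedBall_zero_iff]
  obtain rfl | hs0 := eq_or_ne s 0
  · simp only [norm_zero]; linarith [abs_nonneg (p z)]
  -- the subgradient inequality in the unit direction of `s` gives `‖s‖ ≤ p y - p z`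
  have hsn : 0 < ‖s‖ := norm_pos_iff.2 hs0
  set y := z + ‖s‖⁻¹ • s
  have hyA : |p y| ≤ A := hA y (by
    simp only [Metric.mem_closedBall, dist_zero_right]
    calc ‖z + ‖s‖⁻¹ • s‖ ≤ ‖z‖ + ‖‖s‖⁻¹ • s‖ := norm_add_le _ _
      _ ≤ R + 1 := by rw [norm_smul, norm_inv, norm_norm, inv_mul_cancel₀ hsn.ne']; linarith)
  have hinner : ⟪s, y - z⟫ = ‖s‖ := by
    rw [add_sub_cancel_left, real_inner_smul_right, real_inner_self_eq_norm_sq]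
    field_simp
  have := hs y
  rw [hinner] at this
  linarith [abs_le.1 hzA, abs_le.1 hyA]

theorem mem_subdiff_of_tendsto {p : ℝⁿ → ℝ} (hp : Continuous p) {ι : Type*} {l : Filter ι}
    [l.NeBot] {z s : ι → ℝⁿ} {x σ : ℝⁿ} (hz : Tendsto z l (𝓝 x)) (hs : Tendsto s l (𝓝 σ))
    (hmem : ∀ i, s i ∈ subdiff p (z i)) : σ ∈ subdiff p x := fun y =>
  le_of_tendsto (((hp.tendsto x).comp hz).add (hs.inner (tendsto_const_nhds.sub hz)))
    (Eventually.of_forall fun i => hmem i y)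

theorem exists_mem_subdiff_sub_mem_normalCone {g G : ℝⁿ → ℝ} {X : Set ℝⁿ} {x σ : ℝⁿ}
    {lam c : ℝ} (hg : ConvexOn ℝ univ g) (hG : ConvexOn ℝ univ G) (hX : Convex ℝ X) (hx : x ∈ X)
    (hlam : 0 ≤ lam)
    (hmin : ∀ u ∈ X, g x + lam * G x ≤ g u + lam * G u - ⟪σ, u - x⟫ + c * ‖u - x‖ ^ 2) :
    ∃ sg ∈ subdiff g x, ∃ sG ∈ subdiff G x, σ - (sg + lam • sG) ∈ normalCone X x := by
  have hq : ConvexOn ℝ X fun u => lam * G u + ⟪-σ, u - x⟫ :=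
    ((hG.subset (subset_univ X) hX).smul hlam).add (convexOn_inner_sub hX _ _)
  have hmin' : ∀ u ∈ X, g x + (lam * G x + ⟪-σ, x - x⟫) ≤ g u + (lam * G u + ⟪-σ, u - x⟫) :=
    fun u hu => ((hg.subset (subset_univ X) hX).add hq).le_of_forall_le_add_mul_norm_sub_sq hx
      (c := c) (fun v hv => by
        have := hmin v hv
        simp only [Pi.add_apply, inner_neg_left, sub_self, inner_zero_right, neg_zero, add_zero]
        linarith) hu
  obtain ⟨sg, hsg, h1⟩ := exists_mem_subdiff_forall_le_add_inner hg hq hx hmin'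
  obtain ⟨sG, hsG, h2⟩ := exists_mem_subdiff_forall_le_add_mul_inner hlam hG
    (convexOn_inner_sub hX (sg - σ) x) hx fun u hu => by
      have := h1 u hu
      simp only [sub_self, inner_zero_right, add_zero, inner_neg_left, inner_sub_left] at this ⊢
      linarith
  refine ⟨sg, hsg, sG, hsG, fun u hu => ?_⟩
  have := h2 u hu
  simp only [sub_self, inner_zero_right, inner_sub_left, inner_add_left, real_inner_smul_left]
    at this ⊢
  linarith

noncomputable def linearizedConstraint (G H : ℝⁿ → ℝ) (z s u : ℝⁿ) : ℝ := G u - H z - ⟪s, u - z⟫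

def linearizedFeasibleSet (X : Set ℝⁿ) (G H : ℝⁿ → ℝ) (z s : ℝⁿ) : Set ℝⁿ :=
  {u ∈ X | linearizedConstraint G H z s u ≤ 0}

noncomputable def proxObjective (g : ℝⁿ → ℝ) (β : ℝ) (z s u : ℝⁿ) : ℝ :=
  g u - ⟪s, u - z⟫ + β / 2 * ‖u - z‖ ^ 2

@[simp]
lemma linearizedConstraint_self (G H : ℝⁿ → ℝ) (z s : ℝⁿ) :
    linearizedConstraint G H z s z = G z - H z := by
  simp [linearizedConstraint]

@[simp]
lemma proxObjective_self (g : ℝⁿ → ℝ) (β : ℝ) (z s : ℝⁿ) : proxObjective g β z s z = g z := by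
  simp [proxObjective]

lemma sub_le_linearizedConstraint {G H : ℝⁿ → ℝ} {z s : ℝⁿ} (hs : s ∈ subdiff H z) (u : ℝⁿ) :
    G u - H u ≤ linearizedConstraint G H z s u := by
  have := hs u
  rw [linearizedConstraint]
  linarith

lemma convexOn_linearizedConstraint {G : ℝⁿ → ℝ} (hG : ConvexOn ℝ univ G) (H : ℝⁿ → ℝ)
    (z s : ℝⁿ) : ConvexOn ℝ univ (linearizedConstraint G H z s) := by
  refine ((hG.add (convexOn_inner_sub convex_univ (-s) z)).add_const (-H z)).congr fun u _ => ?_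
  simp only [linearizedConstraint, Pi.add_apply, inner_neg_left]
  ring

lemma convex_linearizedFeasibleSet {X : Set ℝⁿ} {G : ℝⁿ → ℝ} (hX : Convex ℝ X)
    (hG : ConvexOn ℝ univ G) (H : ℝⁿ → ℝ) (z s : ℝⁿ) :
    Convex ℝ (linearizedFeasibleSet X G H z s) :=
  ((convexOn_linearizedConstraint hG H z s).subset (subset_univ X) hX).convex_le 0

lemma strongConvexOn_proxObjective {g : ℝⁿ → ℝ} {ρ : ℝ} (hg : StrongConvexOn univ ρ g) (β : ℝ)
    (z s : ℝⁿ) : StrongConvexOn univ (ρ + β) (proxObjective g β z s) := by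
  rw [strongConvexOn_iff_convex] at hg ⊢
  -- the proximal term differs from `β / 2 * ‖u‖ ^ 2` by an affine function of `u`
  refine ((hg.add (convexOn_inner_sub convex_univ (-(s + β • z)) z)).add_const
    (-(β / 2) * ‖z‖ ^ 2)).congr fun u _ => ?_
  simp only [proxObjective, Pi.add_apply, inner_neg_left, inner_add_left, real_inner_smul_left,
    norm_sub_sq_real, inner_sub_right, real_inner_comm z u, real_inner_self_eq_norm_sq]
  ring

theorem sub_add_le_of_isMinOn_proxObjective {C : Set ℝⁿ} {g h : ℝⁿ → ℝ} {ρ β : ℝ}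
    {z z' s : ℝⁿ} (hg : StrongConvexOn univ ρ g) (hβ : 0 ≤ β) (hC : Convex ℝ C) (hz : z ∈ C)
    (hz' : z' ∈ C) (hs : s ∈ subdiff h z) (hmin : IsMinOn (proxObjective g β z s) C z') :
    g z' - h z' + (ρ + β) / 4 * ‖z' - z‖ ^ 2 ≤ g z - h z := by
  have hdec := ((strongConvexOn_proxObjective hg β z s).subset (subset_univ C) hC).add_le_of_isMinOn
    hmin hz' hz
  rw [proxObjective_self, norm_sub_rev] at hdec
  have hsub := hs z'
  simp only [proxObjective] at hdec
  nlinarith [mul_nonneg hβ (sq_nonneg ‖z' - z‖)]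

def IsKKTPoint (X : Set ℝⁿ) (g h G H : ℝⁿ → ℝ) (x : ℝⁿ) : Prop :=
  x ∈ X ∧ G x ≤ H x ∧ ∃ lam : ℝ, 0 ≤ lam ∧ lam * (G x - H x) = 0 ∧
    ∃ sg ∈ subdiff g x, ∃ sh ∈ subdiff h x, ∃ sG ∈ subdiff G x, ∃ sH ∈ subdiff H x,
      ∃ v ∈ normalCone X x, sg - sh + lam • (sG - sH) + v = 0

theorem isKKTPoint_of_forall_le_proxObjective {X : Set ℝⁿ} {g h G H : ℝⁿ → ℝ} {β : ℝ}
    {x σh σH y : ℝⁿ} (hX : Convex ℝ X) (hg : ConvexOn ℝ univ g) (hG : ConvexOn ℝ univ G)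
    (hβ : 0 ≤ β) (hx : x ∈ X) (hGH : G x ≤ H x) (hσh : σh ∈ subdiff h x)
    (hσH : σH ∈ subdiff H x) (hy : y ∈ X) (hψy : linearizedConstraint G H x σH y < 0)
    (hmin : ∀ u ∈ X, linearizedConstraint G H x σH u < 0 → g x ≤ proxObjective g β x σh u) :
    IsKKTPoint X g h G H x := by
  have hF : ConvexOn ℝ X (proxObjective g β x σh) :=
    ((strongConvexOn_proxObjective (strongConvexOn_zero.2 hg) β x σh).convexOn
      fun r => mul_nonneg (by linarith) (sq_nonneg r)).subset (subset_univ X) hX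
  have hψ : ConvexOn ℝ X (linearizedConstraint G H x σH) :=
    (convexOn_linearizedConstraint hG H x σH).subset (subset_univ X) hX
  obtain ⟨lam, hlam, hcompl, hlag⟩ := exists_lagrange_multiplier_of_slater hF hψ hx
    (by simpa using hGH) hy hψy (by simpa using hmin)
  rw [linearizedConstraint_self] at hcompl
  obtain ⟨sg, hsg, sG, hsG, hnormal⟩ := exists_mem_subdiff_sub_mem_normalCone
    (σ := σh + lam • σH) (c := β / 2) hg hG hX hx hlam fun u hu => by
      have := hlag u hu
      rw [proxObjective_self] at this
      simp only [proxObjective, linearizedConstraint] at this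
      rw [inner_add_left, real_inner_smul_left]
      linear_combination this + hcompl
  exact ⟨hx, hGH, lam, hlam, hcompl, sg, hsg, σh, hσh, sG, hsG, σH, hσH, _, hnormal, by module⟩

structure IsProxDCSeq (X : Set ℝⁿ) (g h G H : ℝⁿ → ℝ) (β : ℝ) (x sh sH : ℕ → ℝⁿ) : Prop where
  mem_subdiff_h : ∀ k, sh k ∈ subdiff h (x k)
  mem_subdiff_H : ∀ k, sH k ∈ subdiff H (x k)
  mem_feasibleSet : ∀ k, x (k + 1) ∈ linearizedFeasibleSet X G H (x k) (sH k)
  isMinOn : ∀ k,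
    IsMinOn (proxObjective g β (x k) (sh k)) (linearizedFeasibleSet X G H (x k) (sH k)) (x (k + 1))

namespace IsProxDCSeq

variable {X : Set (EuclideanSpace ℝ (Fin n))} {g h G H : EuclideanSpace ℝ (Fin n) → ℝ} {ρ β : ℝ}
  {x sh sH : ℕ → EuclideanSpace ℝ (Fin n)}

theorem feasible (hx : IsProxDCSeq X g h G H β x sh sH) (h0X : x 0 ∈ X)
    (h0 : G (x 0) ≤ H (x 0)) : ∀ k, x k ∈ X ∧ G (x k) ≤ H (x k)
  | 0 => ⟨h0X, h0⟩
  | k + 1 => ⟨(hx.mem_feasibleSet k).1, sub_nonpos.1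
      ((sub_le_linearizedConstraint (hx.mem_subdiff_H k) _).trans (hx.mem_feasibleSet k).2)⟩

theorem descent (hx : IsProxDCSeq X g h G H β x sh sH) (hg : StrongConvexOn univ ρ g)
    (hβ : 0 ≤ β) (hX : Convex ℝ X) (hG : ConvexOn ℝ univ G)
    (hfeas : ∀ k, x k ∈ X ∧ G (x k) ≤ H (x k)) (k : ℕ) :
    g (x (k + 1)) - h (x (k + 1)) + (ρ + β) / 4 * ‖x (k + 1) - x k‖ ^ 2 ≤ g (x k) - h (x k) :=
  sub_add_le_of_isMinOn_proxObjective hg hβ (convex_linearizedFeasibleSet hX hG H _ _)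
    ⟨(hfeas k).1, by simpa using (hfeas k).2⟩ (hx.mem_feasibleSet k) (hx.mem_subdiff_h k)
    (hx.isMinOn k)

theorem antitone (hx : IsProxDCSeq X g h G H β x sh sH) (hg : StrongConvexOn univ ρ g)
    (hβ : 0 ≤ β) (hρβ : 0 ≤ ρ + β) (hX : Convex ℝ X) (hG : ConvexOn ℝ univ G)
    (hfeas : ∀ k, x k ∈ X ∧ G (x k) ≤ H (x k)) : Antitone fun k => g (x k) - h (x k) :=
  antitone_nat_of_succ_le fun k => by
    linarith [hx.descent hg hβ hX hG hfeas k, mul_nonneg (div_nonneg hρβ zero_le_four)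
      (sq_nonneg ‖x (k + 1) - x k‖)]

theorem tendsto_sub_nhds_zero (hx : IsProxDCSeq X g h G H β x sh sH)
    (hg : StrongConvexOn univ ρ g) (hβ : 0 ≤ β) (hρβ : 0 < ρ + β) (hX : Convex ℝ X)
    (hG : ConvexOn ℝ univ G) (hgc : Continuous g) (hhc : Continuous h)
    (hfeas : ∀ k, x k ∈ X ∧ G (x k) ≤ H (x k)) (hbdd : Bornology.IsBounded (range x)) :
    Tendsto (fun k => x (k + 1) - x k) atTop (𝓝 0) := by
  have hbelow : BddBelow (range fun k => g (x k) - h (x k)) :=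
    (hbdd.isCompact_closure.bddBelow_image (hgc.sub hhc).continuousOn).mono
      (range_subset_iff.2 fun k => mem_image_of_mem _ (subset_closure (mem_range_self k)))
  have hsq := tendsto_zero_of_add_mul_le (u := fun k => g (x k) - h (x k)) (by positivity)
    (fun k => sq_nonneg ‖x (k + 1) - x k‖) (hx.descent hg hβ hX hG hfeas) hbelow
  rw [tendsto_zero_iff_norm_tendsto_zero]
  simpa using hsq.sqrt

theorem exists_subseq_tendsto_subdiff (hx : IsProxDCSeq X g h G H β x sh sH)
    (hh : ConvexOn ℝ univ h) (hH : ConvexOn ℝ univ H) (hbdd : Bornology.IsBounded (range x))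
    {ks : ℕ → ℕ} {x₀ : ℝⁿ} (hks : Tendsto (fun i => x (ks i)) atTop (𝓝 x₀)) :
    ∃ φ : ℕ → ℕ, StrictMono φ ∧ ∃ σh ∈ subdiff h x₀, ∃ σH ∈ subdiff H x₀,
      Tendsto (fun i => sh (ks (φ i))) atTop (𝓝 σh) ∧
        Tendsto (fun i => sH (ks (φ i))) atTop (𝓝 σH) := by
  obtain ⟨⟨σh, σH⟩, -, φ, hφ, hσ⟩ := tendsto_subseq_of_bounded
    (x := fun i => (sh (ks i), sH (ks i)))
    ((isBounded_biUnion_subdiff hh hbdd).prod (isBounded_biUnion_subdiff hH hbdd))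
    fun i => ⟨mem_biUnion (mem_range_self (ks i)) (hx.mem_subdiff_h (ks i)),
      mem_biUnion (mem_range_self (ks i)) (hx.mem_subdiff_H (ks i))⟩
  have hxφ := hks.comp hφ.tendsto_atTop
  exact ⟨φ, hφ, σh, mem_subdiff_of_tendsto hh.locallyLipschitz.continuous hxφ hσ.fst_nhds
    fun _ => hx.mem_subdiff_h _, σH, mem_subdiff_of_tendsto hH.locallyLipschitz.continuous hxφ
    hσ.snd_nhds fun _ => hx.mem_subdiff_H _, hσ.fst_nhds, hσ.snd_nhds⟩

theorem le_proxObjective_of_tendsto (hx : IsProxDCSeq X g h G H β x sh sH)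
    (hgc : Continuous g) (hHc : Continuous H) {φ : ℕ → ℕ} {x₀ σh σH : ℝⁿ}
    (hxφ : Tendsto (fun i => x (φ i)) atTop (𝓝 x₀))
    (hxφ' : Tendsto (fun i => x (φ i + 1)) atTop (𝓝 x₀))
    (hshφ : Tendsto (fun i => sh (φ i)) atTop (𝓝 σh))
    (hsHφ : Tendsto (fun i => sH (φ i)) atTop (𝓝 σH)) {u : ℝⁿ} (hu : u ∈ X)
    (hψ : linearizedConstraint G H x₀ σH u < 0) : g x₀ ≤ proxObjective g β x₀ σh u := by
  have hψφ : Tendsto (fun i => linearizedConstraint G H (x (φ i)) (sH (φ i)) u) atTop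
      (𝓝 (linearizedConstraint G H x₀ σH u)) :=
    (tendsto_const_nhds.sub ((hHc.tendsto _).comp hxφ)).sub
      (hsHφ.inner (tendsto_const_nhds.sub hxφ))
  have hle : ∀ᶠ i in atTop, proxObjective g β (x (φ i)) (sh (φ i)) (x (φ i + 1)) ≤
      proxObjective g β (x (φ i)) (sh (φ i)) u :=
    (hψφ.eventually_lt_const hψ).mono fun i hi => isMinOn_iff.1 (hx.isMinOn _) u ⟨hu, hi.le⟩
  refine le_of_tendsto_of_tendsto ?_ ?_ hle
  · simpa [proxObjective] using (((hgc.tendsto _).comp hxφ').sub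
      (hshφ.inner (hxφ'.sub hxφ))).add (tendsto_const_nhds.mul ((hxφ'.sub hxφ).norm.pow 2))
  · exact (tendsto_const_nhds.sub (hshφ.inner (tendsto_const_nhds.sub hxφ))).add
      (tendsto_const_nhds.mul ((tendsto_const_nhds.sub hxφ).norm.pow 2))

end IsProxDCSeq

end Euclidean

theorem stmt10_general (n : ℕ) (ιE ιI : Type)
    (a : ιE → EuclideanSpace ℝ (Fin n)) (b : ιE → ℝ)
    (ω : ιI → EuclideanSpace ℝ (Fin n) → ℝ)
    (hω_conv : ∀ i, ConvexOn ℝ Set.univ (ω i))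
    (X : Set (EuclideanSpace ℝ (Fin n)))
    (hX : X = {x | (∀ i, ⟪a i, x⟫ + b i = 0) ∧ ∀ i, ω i x ≤ 0})
    (g h G H : EuclideanSpace ℝ (Fin n) → ℝ)
    (hg : ConvexOn ℝ Set.univ g) (hh : ConvexOn ℝ Set.univ h)
    (hG : ConvexOn ℝ Set.univ G) (hH : ConvexOn ℝ Set.univ H)
    (ρ β : ℝ) (hβ : 0 ≤ β) (hρβ : 0 < ρ + β)
    (hgstrong : ConvexOn ℝ Set.univ (fun y => g y - ρ / 2 * ‖y‖ ^ 2))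
    (hMFCQ : ∀ x ∈ X, G x ≤ H x → ∃ y ∈ X,
      (∀ i, ω i x = 0 → ⟪gradient (ω i) x, y - x⟫ < 0) ∧
      (G x = H x → ∀ sH ∈ subdiff H x, G y - H x - ⟪sH, y - x⟫ < 0))
    (x : ℕ → EuclideanSpace ℝ (Fin n)) (hx0X : x 0 ∈ X) (hx0feas : G (x 0) ≤ H (x 0))
    (hlevel : Bornology.IsBounded
      {y | y ∈ X ∧ G y ≤ H y ∧ g y - h y ≤ g (x 0) - h (x 0)})
    (hiter : ∀ k, ∃ sh ∈ subdiff h (x k), ∃ sH ∈ subdiff H (x k),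
      (x (k + 1) ∈ X ∧ G (x (k + 1)) - H (x k) - ⟪sH, x (k + 1) - x k⟫ ≤ 0) ∧
      ∀ u ∈ X, G u - H (x k) - ⟪sH, u - x k⟫ ≤ 0 →
        g (x (k + 1)) - ⟪sh, x (k + 1) - x k⟫ + β / 2 * ‖x (k + 1) - x k‖ ^ 2 ≤
          g u - ⟪sh, u - x k⟫ + β / 2 * ‖u - x k‖ ^ 2)
    (xstar : EuclideanSpace ℝ (Fin n)) (ks : ℕ → ℕ) (hks : StrictMono ks)
    (hconv : Tendsto (fun i => x (ks i)) atTop (nhds xstar)) :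
    xstar ∈ X ∧ G xstar ≤ H xstar ∧
    ∃ lam : ℝ, 0 ≤ lam ∧ lam * (G xstar - H xstar) = 0 ∧
      ∃ sg ∈ subdiff g xstar, ∃ sh ∈ subdiff h xstar, ∃ sG ∈ subdiff G xstar,
        ∃ sH ∈ subdiff H xstar, ∃ v ∈ normalCone X xstar,
          sg - sh + lam • (sG - sH) + v = 0 := by
  choose sh hsh sH hsH hstep hmin using hiter
  have hseq : IsProxDCSeq X g h G H β x sh sH :=
    ⟨hsh, hsH, hstep, fun k => isMinOn_iff.2 fun u hu => hmin k u hu.1 hu.2⟩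
  have hXconv : Convex ℝ X := hX ▸ convex_constraintSet a b hω_conv
  have hXclosed : IsClosed X := hX ▸ isClosed_constraintSet a b hω_conv
  have hgs : StrongConvexOn univ ρ g := strongConvexOn_iff_convex.2 hgstrong
  have hfeas := hseq.feasible hx0X hx0feas
  have hbdd : Bornology.IsBounded (range x) := hlevel.subset <| range_subset_iff.2 fun k =>
    ⟨(hfeas k).1, (hfeas k).2, hseq.antitone hgs hβ hρβ.le hXconv hG hfeas (Nat.zero_le k)⟩
  have hconv_succ : Tendsto (fun i => x (ks i + 1)) atTop (𝓝 xstar) := by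
    simpa using ((hseq.tendsto_sub_nhds_zero hgs hβ hρβ hXconv hG hg.locallyLipschitz.continuous
      hh.locallyLipschitz.continuous hfeas hbdd).comp hks.tendsto_atTop).add hconv
  obtain ⟨φ, hφ, σh, hσh, σH, hσH, hshφ, hsHφ⟩ :=
    hseq.exists_subseq_tendsto_subdiff hh hH hbdd hconv
  obtain ⟨hxX, hxGH⟩ : xstar ∈ X ∧ G xstar ≤ H xstar :=
    (hXclosed.inter (isClosed_le hG.locallyLipschitz.continuous hH.locallyLipschitz.continuous))
      |>.mem_of_tendsto hconv (Eventually.of_forall fun i => hfeas (ks i))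
  obtain ⟨y, hyX, hy⟩ : ∃ y ∈ X, linearizedConstraint G H xstar σH y < 0 := by
    rcases hxGH.lt_or_eq with hlt | heq
    · exact ⟨xstar, hxX, by simpa using hlt⟩
    · obtain ⟨y, hyX, -, hy⟩ := hMFCQ xstar hxX hxGH
      exact ⟨y, hyX, hy heq σH hσH⟩
  exact isKKTPoint_of_forall_le_proxObjective hXconv hg hG hβ hxX hxGH hσh hσH hyX hy
    fun u hu => hseq.le_proxObjective_of_tendsto hg.locallyLipschitz.continuous
      hH.locallyLipschitz.continuous (hconv.comp hφ.tendsto_atTop)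
      (hconv_succ.comp hφ.tendsto_atTop) hshφ hsHφ hu

/-- subsequential convergence of the proximal DC algorithm to KKT points:
under the generalized MFCQ and bounded level set assumptions, every accumulation point of the
proximal DC iterates for `min{g - h : x ∈ X, G - H ≤ 0}` is a KKT point. -/
theorem stmt10 (n : ℕ) (ιE ιI : Type) [Fintype ιE] [Fintype ιI]
    (a : ιE → EuclideanSpace ℝ (Fin n)) (b : ιE → ℝ)
    (ω : ιI → EuclideanSpace ℝ (Fin n) → ℝ)
    (hω_conv : ∀ i, ConvexOn ℝ Set.univ (ω i)) (hω_smooth : ∀ i, ContDiff ℝ 1 (ω i))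
    (X : Set (EuclideanSpace ℝ (Fin n)))
    (hX : X = {x | (∀ i, ⟪a i, x⟫ + b i = 0) ∧ ∀ i, ω i x ≤ 0}) (hXne : X.Nonempty)
    (g h G H : EuclideanSpace ℝ (Fin n) → ℝ)
    (hg : ConvexOn ℝ Set.univ g) (hh : ConvexOn ℝ Set.univ h)
    (hG : ConvexOn ℝ Set.univ G) (hH : ConvexOn ℝ Set.univ H)
    (ρ β : ℝ) (hρ : 0 ≤ ρ) (hβ : 0 ≤ β) (hρβ : 0 < ρ + β)
    (hgstrong : ConvexOn ℝ Set.univ (fun y => g y - ρ / 2 * ‖y‖ ^ 2))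
    (hMFCQ : ∀ x ∈ X, G x ≤ H x → ∃ y ∈ X,
      (∀ i, ω i x = 0 → ⟪gradient (ω i) x, y - x⟫ < 0) ∧
      (G x = H x → ∀ sH ∈ subdiff H x, G y - H x - ⟪sH, y - x⟫ < 0))
    (x : ℕ → EuclideanSpace ℝ (Fin n)) (hx0X : x 0 ∈ X) (hx0feas : G (x 0) ≤ H (x 0))
    (hlevel : Bornology.IsBounded
      {y | y ∈ X ∧ G y ≤ H y ∧ g y - h y ≤ g (x 0) - h (x 0)})
    (hiter : ∀ k, ∃ sh ∈ subdiff h (x k), ∃ sH ∈ subdiff H (x k),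
      (x (k + 1) ∈ X ∧ G (x (k + 1)) - H (x k) - ⟪sH, x (k + 1) - x k⟫ ≤ 0) ∧
      ∀ u ∈ X, G u - H (x k) - ⟪sH, u - x k⟫ ≤ 0 →
        g (x (k + 1)) - ⟪sh, x (k + 1) - x k⟫ + β / 2 * ‖x (k + 1) - x k‖ ^ 2 ≤
          g u - ⟪sh, u - x k⟫ + β / 2 * ‖u - x k‖ ^ 2)
    (xstar : EuclideanSpace ℝ (Fin n)) (ks : ℕ → ℕ) (hks : StrictMono ks)
    (hconv : Tendsto (fun i => x (ks i)) atTop (nhds xstar)) :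
    xstar ∈ X ∧ G xstar ≤ H xstar ∧
    ∃ lam : ℝ, 0 ≤ lam ∧ lam * (G xstar - H xstar) = 0 ∧
      ∃ sg ∈ subdiff g xstar, ∃ sh ∈ subdiff h xstar, ∃ sG ∈ subdiff G xstar,
        ∃ sH ∈ subdiff H xstar, ∃ v ∈ normalCone X xstar,
          sg - sh + lam • (sG - sH) + v = 0 :=
  stmt10_general n ιE ιI a b ω hω_conv X hX g h G H hg hh hG hH ρ β hβ hρβ hgstrong hMFCQ x hx0X
    hx0feas hlevel hiter xstar ks hks hconv
end

section
/- Let g, h, G, H : ℝ^n → ℝ be convex, let X ⊆ ℝ^n be a nonempty closed convex set, let β ≥ 0, and let f = g − h. Suppose f* ∈ ℝ satisfies f(x) ≥ f* for every x ∈ X with G(x) ≤ H(x). Let x^0 ∈ X satisfy G(x^0) ≤ H(x^0), and suppose that for each j ≥ 0 there are s_h^j ∈ ∂h(x^j) and s_H^j ∈ ∂H(x^j) such that x^{j+1} minimizes u ↦ g(u) − ⟨s_h^j, u − x^j⟩ + (β/2)‖u − x^j‖² over {u ∈ X : G(u) − H(x^j) − ⟨s_H^j, u − x^j⟩ ≤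 0}. Then for every integer k ≥ 1 there exists ℓ ∈ {0,1,…,k−1} such that for every x ∈ X with G(x) − H(x^ℓ) − ⟨s_H^ℓ, x − x^ℓ⟩ ≤ 0 one has g(x) − g(x^ℓ) − ⟨s_h^ℓ, x − x^ℓ⟩ + (β/2)‖x − x^ℓ‖² ≥ −(f(x^0) − f*)/k. -/
/-!
The iterates stay feasible: a subgradient of `H` at `x^j` makes the linearized constraint at `x^j`
majorize `G - H`. Comparing the subproblem's model at any linearized-feasible point with its value
at the minimizer `x^{j+1}`, and using a subgradient of `h` at `x^j`, the model gap is at least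
`f(x^{j+1}) - f(x^j)` with `f = g - h`. These decreases telescope to at most `f(x^0) - f*`, so the
smallest of the first `k` is at most `(f(x^0) - f*)/k`.
-/

open scoped RealInnerProductSpace

theorem exists_lt_sub_succ_le_div (a : ℕ → ℝ) (c : ℝ) {k : ℕ} (hk : 0 < k) (hc : c ≤ a k) :
    ∃ l < k, a l - a (l + 1) ≤ (a 0 - c) / k := by
  obtain ⟨l, hl, hmin⟩ := Finset.exists_min_image (Finset.range k) (fun j => a j - a (j + 1))
    ⟨0, Finset.mem_range.mpr hk⟩
  refine ⟨l, Finset.mem_range.mp hl, ?_⟩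
  have hsum : (k : ℝ) * (a l - a (l + 1)) ≤ a 0 - a k := by
    calc (k : ℝ) * (a l - a (l + 1))
        = (Finset.range k).card • (a l - a (l + 1)) := by simp
      _ ≤ ∑ j ∈ Finset.range k, (a j - a (j + 1)) := Finset.card_nsmul_le_sum _ _ _ hmin
      _ = a 0 - a k := Finset.sum_range_sub' a k
  rw [le_div_iff₀' (by exact_mod_cast hk)]
  linarith

section ProximalDCA

variable {n : ℕ} {g h G H : EuclideanSpace ℝ (Fin n) → ℝ} {β : ℝ}
  {s u y z : EuclideanSpace ℝ (Fin n)}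

theorem le_of_linearized_constraint (hs : s ∈ subdiff H y)
    (hu : G u - H y - ⟪s, u - y⟫ ≤ 0) : G u ≤ H u := by
  linarith [hs u]

theorem iterate_feasible {X : Set (EuclideanSpace ℝ (Fin n))}
    {x sH : ℕ → EuclideanSpace ℝ (Fin n)}
    (hx0X : x 0 ∈ X) (hx0feas : G (x 0) ≤ H (x 0))
    (hstep : ∀ j, x (j + 1) ∈ X ∧ G (x (j + 1)) - H (x j) - ⟪sH j, x (j + 1) - x j⟫ ≤ 0)
    (hsH : ∀ j, sH j ∈ subdiff H (x j)) (j : ℕ) : x j ∈ X ∧ G (x j) ≤ H (x j) := by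
  cases j with
  | zero => exact ⟨hx0X, hx0feas⟩
  | succ j => exact ⟨(hstep j).1, le_of_linearized_constraint (hsH j) (hstep j).2⟩

theorem sub_le_model_gap (hs : s ∈ subdiff h y) (hβ : 0 ≤ β)
    (hz : g z - ⟪s, z - y⟫ + β / 2 * ‖z - y‖ ^ 2 ≤ g u - ⟪s, u - y⟫ + β / 2 * ‖u - y‖ ^ 2) :
    (g z - h z) - (g y - h y) ≤ g u - g y - ⟪s, u - y⟫ + β / 2 * ‖u - y‖ ^ 2 := by
  have hprox : 0 ≤ β / 2 * ‖z - y‖ ^ 2 := by positivity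
  linarith [hs z]

end ProximalDCA

theorem stmt12_general (n : ℕ) (g h G H : EuclideanSpace ℝ (Fin n) → ℝ)
    (X : Set (EuclideanSpace ℝ (Fin n))) (β : ℝ) (hβ : 0 ≤ β)
    (fstar : ℝ) (hfstar : ∀ x ∈ X, G x ≤ H x → fstar ≤ g x - h x)
    (x : ℕ → EuclideanSpace ℝ (Fin n)) (hx0X : x 0 ∈ X) (hx0feas : G (x 0) ≤ H (x 0))
    (sh sH : ℕ → EuclideanSpace ℝ (Fin n))
    (hsh : ∀ j, sh j ∈ subdiff h (x j)) (hsH : ∀ j, sH j ∈ subdiff H (x j))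
    (hiter : ∀ j,
      (x (j + 1) ∈ X ∧ G (x (j + 1)) - H (x j) - ⟪sH j, x (j + 1) - x j⟫ ≤ 0) ∧
      ∀ u ∈ X, G u - H (x j) - ⟪sH j, u - x j⟫ ≤ 0 →
        g (x (j + 1)) - ⟪sh j, x (j + 1) - x j⟫ + β / 2 * ‖x (j + 1) - x j‖ ^ 2 ≤
          g u - ⟪sh j, u - x j⟫ + β / 2 * ‖u - x j‖ ^ 2)
    (k : ℕ) (hk : 1 ≤ k) :
    ∃ l < k, ∀ x' ∈ X, G x' - H (x l) - ⟪sH l, x' - x l⟫ ≤ 0 →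
      g x' - g (x l) - ⟪sh l, x' - x l⟫ + β / 2 * ‖x' - x l‖ ^ 2 ≥
        -((g (x 0) - h (x 0) - fstar) / k) := by
  have hfeas := iterate_feasible hx0X hx0feas (fun j => (hiter j).1) hsH k
  obtain ⟨l, hl, hdecrease⟩ := exists_lt_sub_succ_le_div (fun j => g (x j) - h (x j)) fstar
    hk (hfstar (x k) hfeas.1 hfeas.2)
  refine ⟨l, hl, fun x' hx' hlin => ?_⟩
  have hgap := sub_le_model_gap (hsh l) hβ ((hiter l).2 x' hx' hlin)
  linarith

/-- O(1/k) iteration complexity of the proximal DC algorithm: along the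
proximal DC iterates for `min{g - h : x ∈ X, G - H ≤ 0}` with optimal value lower bound `f*`,
for every `k ≥ 1` some iterate `ℓ < k` is an `(f(x⁰) - f*)/k`-approximate KKT point in the
sense of the linearized subproblem optimality. -/
theorem stmt12 (n : ℕ) (g h G H : EuclideanSpace ℝ (Fin n) → ℝ)
    (hg : ConvexOn ℝ Set.univ g) (hh : ConvexOn ℝ Set.univ h)
    (hG : ConvexOn ℝ Set.univ G) (hH : ConvexOn ℝ Set.univ H)
    (X : Set (EuclideanSpace ℝ (Fin n))) (hXne : X.Nonempty) (hXcl : IsClosed X)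
    (hXconv : Convex ℝ X) (β : ℝ) (hβ : 0 ≤ β)
    (fstar : ℝ) (hfstar : ∀ x ∈ X, G x ≤ H x → fstar ≤ g x - h x)
    (x : ℕ → EuclideanSpace ℝ (Fin n)) (hx0X : x 0 ∈ X) (hx0feas : G (x 0) ≤ H (x 0))
    (sh sH : ℕ → EuclideanSpace ℝ (Fin n))
    (hsh : ∀ j, sh j ∈ subdiff h (x j)) (hsH : ∀ j, sH j ∈ subdiff H (x j))
    (hiter : ∀ j,
      (x (j + 1) ∈ X ∧ G (x (j + 1)) - H (x j) - ⟪sH j, x (j + 1) - x j⟫ ≤ 0) ∧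
      ∀ u ∈ X, G u - H (x j) - ⟪sH j, u - x j⟫ ≤ 0 →
        g (x (j + 1)) - ⟪sh j, x (j + 1) - x j⟫ + β / 2 * ‖x (j + 1) - x j‖ ^ 2 ≤
          g u - ⟪sh j, u - x j⟫ + β / 2 * ‖u - x j‖ ^ 2)
    (k : ℕ) (hk : 1 ≤ k) :
    ∃ l < k, ∀ x' ∈ X, G x' - H (x l) - ⟪sH l, x' - x l⟫ ≤ 0 →
      g x' - g (x l) - ⟪sh l, x' - x l⟫ + β / 2 * ‖x' - x l‖ ^ 2 ≥
        -((g (x 0) - h (x 0) - fstar) / k) :=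
  stmt12_general n g h G H X β hβ fstar hfstar x hx0X hx0feas sh sH hsh hsH hiter k hk
end

section
/- Let f_1,…,f_N : ℝ^n → ℝ be convex functions and let w ∈ ℝ^N satisfy 0 ≤ w_i ≤ 1 for all i and Σ_{i=1}^N w_i = 1. Define G(x) = Σ_{i=1}^N w_i Σ_{j=i}^N Ĉ_[j](x) and H(x) = Σ_{i=1}^{N−1} w_i Σ_{j=i+1}^N Ĉ_[j](x), where Ĉ_[j](x) denotes the j-th smallest value among f_1(x),…,f_N(x). Then G and H are continuous convex functions on ℝ^n, and for every x ∈ ℝ^n one has Σ_{i=1}^N w_i Ĉ_[i](x) = G(x) − H(x); in particular, the L-estimator constraint Σ_{i=1}^N w_i Ĉ_[i](x) ≤ 0 is equivalent to the DC constraint G(x) − H(x) ≤ 0. -/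
/-!
For an upper set `T` of indices, `∑ j ∈ T, Ĉ_[j](x)` is the sum of the `#T` largest values
`f_t(x)`, i.e. the maximum of `∑ t ∈ S, f_t(x)` over all `S` with `#S = #T`: every sum of `#T`
order statistics is dominated by the top ones because the order statistics are monotone. As a
pointwise maximum of convex functions it is convex, so `G` and `H`, nonnegative combinations of
such sums over `{j | i ≤ j}` and `{j | i < j}`, are convex, hence continuous on `ℝⁿ`. Their
difference telescopes termwise to `w_i Ĉ_[i](x)`.
-/

open scoped BigOperators

open Finset

namespace Finset

variable {ι M : Type*} [AddCommMonoid M] [LinearOrder M] [IsOrderedAddMonoid M]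

theorem sum_le_sum_of_card_eq_of_forall_le {A B : Finset ι} {g : ι → M} (hcard : #A = #B)
    (hle : ∀ a ∈ A, ∀ b ∈ B, g a ≤ g b) : ∑ a ∈ A, g a ≤ ∑ b ∈ B, g b := by
  rcases A.eq_empty_or_nonempty with rfl | hA
  · rw [card_empty, eq_comm, card_eq_zero] at hcard
    simp [hcard]
  calc ∑ a ∈ A, g a ≤ #A • A.sup' hA g := sum_le_card_nsmul _ _ _ fun a ha => le_sup' g ha
    _ ≤ ∑ b ∈ B, g b :=
      hcard ▸ card_nsmul_le_sum _ _ _ fun b hb => sup'_le hA g fun a ha => hle a ha b hb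

theorem sum_le_sum_of_isUpperSet [LinearOrder ι] {S T : Finset ι} {g : ι → M} (hg : Monotone g)
    (hT : IsUpperSet (T : Set ι)) (hcard : #S = #T) : ∑ i ∈ S, g i ≤ ∑ i ∈ T, g i := by
  classical
  rw [← sum_inter_add_sum_sdiff S T, ← sum_inter_add_sum_sdiff T S, inter_comm]
  refine add_le_add le_rfl (sum_le_sum_of_card_eq_of_forall_le (card_sdiff_comm hcard) ?_)
  intro a ha b hb
  rw [mem_sdiff] at ha hb
  exact hg (le_of_not_ge fun hba => ha.2 (hT hba hb.1))

end Finset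

section ConvexOn

variable {𝕜 ι E β : Type*} [Semiring 𝕜] [PartialOrder 𝕜] [AddCommMonoid E] [SMul 𝕜 E]
  {s : Set E}

theorem ConvexOn.finset_sum [AddCommMonoid β] [PartialOrder β] [IsOrderedAddMonoid β]
    [Module 𝕜 β] {t : Finset ι} {g : ι → E → β} (hs : Convex 𝕜 s)
    (hg : ∀ i ∈ t, ConvexOn 𝕜 s (g i)) : ConvexOn 𝕜 s (fun x => ∑ i ∈ t, g i x) := by
  simpa only [← Finset.sum_apply] using
    sum_induction g (ConvexOn 𝕜 s) (fun _ _ => ConvexOn.add) (convexOn_const (0 : β) hs) hg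

theorem ConvexOn.finset_sup' [AddCommMonoid β] [LinearOrder β] [IsOrderedAddMonoid β]
    [Module 𝕜 β] [PosSMulStrictMono 𝕜 β] {t : Finset ι} {g : ι → E → β} (ht : t.Nonempty)
    (hg : ∀ i ∈ t, ConvexOn 𝕜 s (g i)) : ConvexOn 𝕜 s (t.sup' ht g) :=
  sup'_induction ht g (fun _ h₁ _ h₂ => h₁.sup h₂) hg

end ConvexOn

theorem sum_orderStat_eq_sup' {N : ℕ} (z : Fin N → ℝ) {T : Finset (Fin N)}
    (hT : IsUpperSet (T : Set (Fin N))) :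
    ∑ j ∈ T, orderStat z j =
      (powersetCard #T univ).sup' (powersetCard_nonempty.2 (card_le_card (subset_univ T)))
        (fun S => ∑ t ∈ S, z t) := by
  set σ := Tuple.sort z
  refine le_antisymm ?_ (sup'_le _ _ fun S hS => ?_)
  · refine le_sup'_of_le _ (b := T.map σ.toEmbedding) ?_ (sum_map T σ.toEmbedding z).ge
    rw [mem_powersetCard, card_map]
    exact ⟨subset_univ _, rfl⟩
  · rw [mem_powersetCard] at hS
    have hsum : ∑ t ∈ S, z t = ∑ j ∈ S.map σ.symm.toEmbedding, orderStat z j := by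
      simp [orderStat, σ]
    rw [hsum]
    exact sum_le_sum_of_isUpperSet (Tuple.monotone_sort z) hT (by rw [card_map, hS.2])

theorem convexOn_sum_orderStat {E : Type*} [AddCommMonoid E] [Module ℝ E] {s : Set E}
    (hs : Convex ℝ s) {N : ℕ} {f : Fin N → E → ℝ} (hf : ∀ i, ConvexOn ℝ s (f i))
    {T : Finset (Fin N)} (hT : IsUpperSet (T : Set (Fin N))) :
    ConvexOn ℝ s (fun x => ∑ j ∈ T, orderStat (fun t => f t x) j) := by
  have hsup : (fun x => ∑ j ∈ T, orderStat (fun t => f t x) j) =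
      (powersetCard #T univ).sup' (powersetCard_nonempty.2 (card_le_card (subset_univ T)))
        (fun S x => ∑ t ∈ S, f t x) :=
    funext fun x => by rw [Finset.sup'_apply, sum_orderStat_eq_sup' _ hT]
  rw [hsup]
  exact ConvexOn.finset_sup' _ fun S _ => ConvexOn.finset_sum hs fun t _ => hf t

theorem stmt13_general (n N : ℕ)
    (f : Fin N → EuclideanSpace ℝ (Fin n) → ℝ)
    (hf : ∀ i, ConvexOn ℝ Set.univ (f i))
    (w : Fin N → ℝ) (hw0 : ∀ i, 0 ≤ w i)
    (G H : EuclideanSpace ℝ (Fin n) → ℝ)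
    (hGdef : G = fun x => ∑ i : Fin N, w i *
      ∑ j ∈ Finset.univ.filter (fun j : Fin N => i ≤ j), orderStat (fun t => f t x) j)
    (hHdef : H = fun x => ∑ i : Fin N, w i *
      ∑ j ∈ Finset.univ.filter (fun j : Fin N => i < j), orderStat (fun t => f t x) j) :
    Continuous G ∧ ConvexOn ℝ Set.univ G ∧ Continuous H ∧ ConvexOn ℝ Set.univ H ∧
    (∀ x, (∑ i : Fin N, w i * orderStat (fun t => f t x) i) = G x - H x) ∧
    (∀ x, ((∑ i : Fin N, w i * orderStat (fun t => f t x) i) ≤ 0 ↔ G x - H x ≤ 0)) := by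
  simp only [filter_le_eq_Ici, filter_lt_eq_Ioi] at hGdef hHdef
  have weighted_convex (T : Fin N → Finset (Fin N)) (hT : ∀ i, IsUpperSet (T i : Set (Fin N))) :
      ConvexOn ℝ Set.univ fun x => ∑ i, w i * ∑ j ∈ T i, orderStat (fun t => f t x) j :=
    ConvexOn.finset_sum convex_univ fun i _ =>
      (convexOn_sum_orderStat convex_univ hf (hT i)).smul (hw0 i)
  have hG : ConvexOn ℝ Set.univ G := hGdef ▸ weighted_convex _ fun i => by
    simpa using isUpperSet_Ici i
  have hH : ConvexOn ℝ Set.univ H := hHdef ▸ weighted_convex _ fun i => by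
    simpa using isUpperSet_Ioi i
  have hGH (x) : ∑ i, w i * orderStat (fun t => f t x) i = G x - H x := by
    simp only [hGdef, hHdef, ← sum_sub_distrib, ← mul_sub, ← add_sum_Ioi_eq_sum_Ici,
      add_sub_cancel_right]
  refine ⟨?_, hG, ?_, hH, hGH, fun x => by rw [hGH x]⟩
  · exact continuousOn_univ.1 (hG.continuousOn isOpen_univ)
  · exact continuousOn_univ.1 (hH.continuousOn isOpen_univ)

/-- DC reformulation for L-estimators of the empirical quantile: with
`G(x) = ∑_{i=1}^N w_i ∑_{j=i}^N Ĉ_[j](x)` and `H(x) = ∑_{i=1}^{N-1} w_i ∑_{j=i+1}^N Ĉ_[j](x)`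
(0-indexed below, the `i = N` term of `H` being an empty sum), `G` and `H` are continuous and
convex, `∑_i w_i Ĉ_[i](x) = G(x) - H(x)`, and the L-estimator constraint is the DC constraint. -/
theorem stmt13 (n N : ℕ) (hN : 0 < N)
    (f : Fin N → EuclideanSpace ℝ (Fin n) → ℝ)
    (hf : ∀ i, ConvexOn ℝ Set.univ (f i))
    (w : Fin N → ℝ) (hw0 : ∀ i, 0 ≤ w i) (hw1 : ∀ i, w i ≤ 1) (hws : (∑ i, w i) = 1)
    (G H : EuclideanSpace ℝ (Fin n) → ℝ)
    (hGdef : G = fun x => ∑ i : Fin N, w i *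
      ∑ j ∈ Finset.univ.filter (fun j : Fin N => i ≤ j), orderStat (fun t => f t x) j)
    (hHdef : H = fun x => ∑ i : Fin N, w i *
      ∑ j ∈ Finset.univ.filter (fun j : Fin N => i < j), orderStat (fun t => f t x) j) :
    Continuous G ∧ ConvexOn ℝ Set.univ G ∧ Continuous H ∧ ConvexOn ℝ Set.univ H ∧
    (∀ x, (∑ i : Fin N, w i * orderStat (fun t => f t x) i) = G x - H x) ∧
    (∀ x, ((∑ i : Fin N, w i * orderStat (fun t => f t x) i) ≤ 0 ↔ G x - H x ≤ 0)) :=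
  stmt13_general n N f hf w hw0 G H hGdef hHdef
end
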